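/- arXiv:1010.5808 — 7 statements merged into one kernel-verified Lean document; each statement's English description precedes it below -/
import Mathlib

section
/- Let T* > 0 and K > 0, and let d : [0,T*] × [0,∞) → [0,∞) be a bounded measurable function satisfying d(t,x) ≤ K ∫₀ᵗ ∫₀^{t−s+x} d(s,v) dv ds for all t ∈ [0,T*] and x ≥ 0. Then d(t,x) = 0 for all (t,x) ∈ [0,T*] × [0,∞). -/
open MeasureTheory Set Filter

/-!
Iterating the integral inequality from the bound `d ≤ M` gives, by induction on `n`,
`d t x ≤ M (K t (t + x))ⁿ / n!`: on the region of integration `s + v ≤ t + x`, so the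
inner integral of the `n`-th bound is at most `(t + x) · M Kⁿ (t + x)ⁿ sⁿ / n!`, and
integrating `sⁿ` over `[0, t]` produces the factor `tⁿ⁺¹ / (n + 1)`. Since `cⁿ / n! → 0`,
`d` vanishes.
-/

namespace intervalIntegral

/-- `f` need not be integrable: if it is not, its integral is `0 ≤ ∫ g`. -/
theorem integral_mono_of_nonneg_of_le {f g : ℝ → ℝ} {a b : ℝ} (hab : a ≤ b)
    (hf : ∀ x ∈ Icc a b, 0 ≤ f x) (hfg : ∀ x ∈ Icc a b, f x ≤ g x)
    (hg : IntervalIntegrable g volume a b) :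
    ∫ x in a..b, f x ≤ ∫ x in a..b, g x := by
  rw [integral_of_le hab, integral_of_le hab]
  exact integral_mono_of_nonneg
    (ae_restrict_of_forall_mem measurableSet_Ioc fun x hx => hf x (Ioc_subset_Icc_self hx))
    hg.1
    (ae_restrict_of_forall_mem measurableSet_Ioc fun x hx => hfg x (Ioc_subset_Icc_self hx))

theorem integral_le_sub_mul_of_nonneg_of_le {f : ℝ → ℝ} {a b c : ℝ} (hab : a ≤ b)
    (hf : ∀ x ∈ Icc a b, 0 ≤ f x) (hfc : ∀ x ∈ Icc a b, f x ≤ c) :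
    ∫ x in a..b, f x ≤ (b - a) * c := by
  simpa using integral_mono_of_nonneg_of_le hab hf hfc intervalIntegrable_const

end intervalIntegral

open intervalIntegral

section

variable {T K C : ℝ} {d : ℝ → ℝ → ℝ}

theorem le_pow_div_factorial_succ (hK : 0 ≤ K) (hC : 0 ≤ C)
    (hpos : ∀ t ∈ Icc (0:ℝ) T, ∀ x ≥ (0:ℝ), 0 ≤ d t x)
    (hineq : ∀ t ∈ Icc (0:ℝ) T, ∀ x ≥ (0:ℝ),
      d t x ≤ K * ∫ s in (0:ℝ)..t, ∫ v in (0:ℝ)..(t - s + x), d s v)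
    {n : ℕ}
    (hn : ∀ t ∈ Icc (0:ℝ) T, ∀ x ≥ (0:ℝ), d t x ≤ C * (K * t * (t + x)) ^ n / n.factorial)
    {t : ℝ} (ht : t ∈ Icc (0:ℝ) T) {x : ℝ} (hx : 0 ≤ x) :
    d t x ≤ C * (K * t * (t + x)) ^ (n + 1) / (n + 1).factorial := by
  obtain ⟨ht0, htT⟩ := ht
  set A := C * K ^ n * (t + x) ^ (n + 1) / n.factorial with hA
  have hinner : ∀ s ∈ Icc 0 t, ∫ v in (0:ℝ)..(t - s + x), d s v ≤ A * s ^ n := by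
    rintro s ⟨hs0, hst⟩
    have hsT : s ∈ Icc 0 T := ⟨hs0, hst.trans htT⟩
    calc ∫ v in (0:ℝ)..(t - s + x), d s v
        ≤ (t - s + x - 0) * (C * (K * s * (t + x)) ^ n / n.factorial) := by
          refine integral_le_sub_mul_of_nonneg_of_le (by linarith)
            (fun v hv => hpos s hsT v hv.1) fun v hv => (hn s hsT v hv.1).trans ?_
          have : 0 ≤ K * s * (s + v) := by have := hv.1; positivity
          gcongr C * (K * s * ?_) ^ n / _
          linarith [hv.2]
      _ ≤ (t + x) * (C * (K * s * (t + x)) ^ n / n.factorial) := by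
          have : 0 ≤ K * s * (t + x) := by positivity
          gcongr
          linarith
      _ = A * s ^ n := by rw [hA, mul_pow, mul_pow]; ring
  have houter :
      ∫ s in (0:ℝ)..t, ∫ v in (0:ℝ)..(t - s + x), d s v ≤ A * (t ^ (n + 1) / (n + 1)) := by
    calc ∫ s in (0:ℝ)..t, ∫ v in (0:ℝ)..(t - s + x), d s v
        ≤ ∫ s in (0:ℝ)..t, A * s ^ n :=
          integral_mono_of_nonneg_of_le ht0
            (fun s hs => integral_nonneg (by linarith [hs.2])
              fun v hv => hpos s ⟨hs.1, hs.2.trans htT⟩ v hv.1)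
            hinner ((continuous_const.mul (continuous_pow n)).intervalIntegrable 0 t)
      _ = A * (t ^ (n + 1) / (n + 1)) := by simp
  calc d t x ≤ K * ∫ s in (0:ℝ)..t, ∫ v in (0:ℝ)..(t - s + x), d s v :=
        hineq t ⟨ht0, htT⟩ x hx
    _ ≤ K * (A * (t ^ (n + 1) / (n + 1))) := by gcongr
    _ = C * (K * t * (t + x)) ^ (n + 1) / (n + 1).factorial := by
        rw [hA, Nat.factorial_succ, mul_pow, mul_pow]
        push_cast
        field_simp
        ring

theorem le_pow_div_factorial (hK : 0 ≤ K) (hC : 0 ≤ C)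
    (hpos : ∀ t ∈ Icc (0:ℝ) T, ∀ x ≥ (0:ℝ), 0 ≤ d t x)
    (hbdd : ∀ t ∈ Icc (0:ℝ) T, ∀ x ≥ (0:ℝ), d t x ≤ C)
    (hineq : ∀ t ∈ Icc (0:ℝ) T, ∀ x ≥ (0:ℝ),
      d t x ≤ K * ∫ s in (0:ℝ)..t, ∫ v in (0:ℝ)..(t - s + x), d s v)
    (n : ℕ) :
    ∀ t ∈ Icc (0:ℝ) T, ∀ x ≥ (0:ℝ), d t x ≤ C * (K * t * (t + x)) ^ n / n.factorial := by
  induction n with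
  | zero => simpa using hbdd
  | succ n ih => exact fun t ht x hx => le_pow_div_factorial_succ hK hC hpos hineq ih ht hx

end

theorem gronwall_type_vanishing_general
    (T K M : ℝ) (hK : 0 < K)
    (d : ℝ → ℝ → ℝ)
    (hpos : ∀ t ∈ Set.Icc (0:ℝ) T, ∀ x ≥ (0:ℝ), 0 ≤ d t x)
    (hbdd : ∀ t ∈ Set.Icc (0:ℝ) T, ∀ x ≥ (0:ℝ), d t x ≤ M)
    (hineq : ∀ t ∈ Set.Icc (0:ℝ) T, ∀ x ≥ (0:ℝ),
      d t x ≤ K * ∫ s in (0:ℝ)..t, ∫ v in (0:ℝ)..(t - s + x), d s v) :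
    ∀ t ∈ Set.Icc (0:ℝ) T, ∀ x ≥ (0:ℝ), d t x = 0 := by
  intro t ht x hx
  have hM : 0 ≤ M := (hpos t ht x hx).trans (hbdd t ht x hx)
  have hlim : Tendsto (fun n : ℕ => M * (K * t * (t + x)) ^ n / n.factorial) atTop (nhds 0) := by
    simpa [mul_div_assoc] using
      (FloorSemiring.tendsto_pow_div_factorial_atTop (K * t * (t + x))).const_mul M
  have hle : d t x ≤ 0 :=
    ge_of_tendsto' hlim fun n => le_pow_div_factorial hK.le hM hpos hbdd hineq n t ht x hx
  exact le_antisymm hle (hpos t ht x hx)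

/-- Let `T* > 0` and `K > 0`, and let `d : [0,T*] × [0,∞) → [0,∞)` be a
bounded measurable function satisfying
`d(t,x) ≤ K ∫₀ᵗ ∫₀^{t−s+x} d(s,v) dv ds` for all `t ∈ [0,T*]` and `x ≥ 0`.
Then `d(t,x) = 0` for all `(t,x) ∈ [0,T*] × [0,∞)`. -/
theorem gronwall_type_vanishing
    (T K M : ℝ) (hT : 0 < T) (hK : 0 < K) (hM : 0 < M)
    (d : ℝ → ℝ → ℝ) (hmeas : Measurable (Function.uncurry d))
    (hpos : ∀ t ∈ Set.Icc (0:ℝ) T, ∀ x ≥ (0:ℝ), 0 ≤ d t x)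
    (hbdd : ∀ t ∈ Set.Icc (0:ℝ) T, ∀ x ≥ (0:ℝ), d t x ≤ M)
    (hineq : ∀ t ∈ Set.Icc (0:ℝ) T, ∀ x ≥ (0:ℝ),
      d t x ≤ K * ∫ s in (0:ℝ)..t, ∫ v in (0:ℝ)..(t - s + x), d s v) :
    ∀ t ∈ Set.Icc (0:ℝ) T, ∀ x ≥ (0:ℝ), d t x = 0 :=
  gronwall_type_vanishing_general T K M hK d hpos hbdd hineq
end

section
/- Let T* > 0, K > 0, M > 0, and let d̄ be a measurable function on the set {(u,w) : u ∈ [0,T*], w ≥ u} with values in [0,M] that satisfies d̄(u,w) ≤ K ∫₀ᵘ ∫ₛʷ d̄(s,z) dz ds for all (u,w) in this set. Then for every natural number n and all (u,w) in the set, d̄(u,w) ≤ M Kⁿ (u·w)ⁿ / (n!)². -/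
/-!
Induction on `n`. If `d̄(s,z) ≤ C (s z)ⁿ` on the region, the inner integral is at most
`C sⁿ wⁿ⁺¹/(n+1)` and the outer one at most `C (u w)ⁿ⁺¹/(n+1)²`, so the defining inequality
improves the constant from `C` to `K C/(n+1)²`, which turns `M Kⁿ/(n!)²` into `M Kⁿ⁺¹/((n+1)!)²`.
-/

open MeasureTheory Set

/-- Unlike `intervalIntegral.integral_mono_on`, no integrability of `f` is required: a
non-integrable `f` has integral `0`. -/
theorem intervalIntegral.integral_mono_of_nonneg {f g : ℝ → ℝ} {a b : ℝ} (hab : a ≤ b)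
    (hg : IntervalIntegrable g volume a b) (hf : ∀ x ∈ Ioc a b, 0 ≤ f x)
    (hfg : ∀ x ∈ Ioc a b, f x ≤ g x) :
    ∫ x in a..b, f x ≤ ∫ x in a..b, g x := by
  rw [intervalIntegral.integral_of_le hab, intervalIntegral.integral_of_le hab]
  exact MeasureTheory.integral_mono_of_nonneg
    (ae_restrict_of_forall_mem measurableSet_Ioc hf) hg.1
    (ae_restrict_of_forall_mem measurableSet_Ioc hfg)

theorem integral_pow_le_of_nonneg {s w : ℝ} (hs : 0 ≤ s) (n : ℕ) :
    ∫ z in s..w, z ^ n ≤ w ^ (n + 1) / (n + 1) := by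
  rw [integral_pow]
  gcongr
  exact sub_le_self _ (by positivity)

theorem integral_integral_le_of_le_mul_pow {d : ℝ → ℝ → ℝ} {C u w : ℝ} {n : ℕ}
    (hC : 0 ≤ C) (hu : 0 ≤ u) (huw : u ≤ w)
    (hd : ∀ s ∈ Icc 0 u, ∀ z ∈ Icc s w, 0 ≤ d s z ∧ d s z ≤ C * (s * z) ^ n) :
    ∫ s in (0 : ℝ)..u, ∫ z in s..w, d s z ≤ C * (u * w) ^ (n + 1) / (n + 1) ^ 2 := by
  have inner_nonneg : ∀ s ∈ Ioc 0 u, 0 ≤ ∫ z in s..w, d s z := fun s hs =>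
    intervalIntegral.integral_nonneg (hs.2.trans huw) fun z hz =>
      (hd s (Ioc_subset_Icc_self hs) z hz).1
  have inner_le : ∀ s ∈ Ioc 0 u,
      ∫ z in s..w, d s z ≤ C * w ^ (n + 1) / (n + 1) * s ^ n := by
    intro s hs
    have hs' := Ioc_subset_Icc_self hs
    calc ∫ z in s..w, d s z ≤ ∫ z in s..w, C * s ^ n * z ^ n :=
          intervalIntegral.integral_mono_of_nonneg (hs.2.trans huw)
            (by apply Continuous.intervalIntegrable; fun_prop)
            (fun z hz => (hd s hs' z (Ioc_subset_Icc_self hz)).1)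
            (fun z hz => (hd s hs' z (Ioc_subset_Icc_self hz)).2.trans_eq (by ring))
      _ = C * s ^ n * ∫ z in s..w, z ^ n := intervalIntegral.integral_const_mul _ _
      _ ≤ C * s ^ n * (w ^ (n + 1) / (n + 1)) := by
          have hs0 : 0 ≤ s := hs.1.le
          gcongr
          exact integral_pow_le_of_nonneg hs0 n
      _ = C * w ^ (n + 1) / (n + 1) * s ^ n := by ring
  calc ∫ s in (0 : ℝ)..u, ∫ z in s..w, d s z
      ≤ ∫ s in (0 : ℝ)..u, C * w ^ (n + 1) / (n + 1) * s ^ n :=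
        intervalIntegral.integral_mono_of_nonneg hu
          (by apply Continuous.intervalIntegrable; fun_prop) inner_nonneg inner_le
    _ = C * w ^ (n + 1) / (n + 1) * (u ^ (n + 1) / (n + 1)) := by
        rw [intervalIntegral.integral_const_mul, integral_pow]
        simp
    _ = C * (u * w) ^ (n + 1) / (n + 1) ^ 2 := by
        field_simp
        ring

theorem gronwall_type_iteration_bound_general
    (T K M : ℝ) (hK : 0 < K)
    (dbar : ℝ → ℝ → ℝ)
    (hrange : ∀ u ∈ Set.Icc (0:ℝ) T, ∀ w ≥ u, 0 ≤ dbar u w ∧ dbar u w ≤ M)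
    (hineq : ∀ u ∈ Set.Icc (0:ℝ) T, ∀ w ≥ u,
      dbar u w ≤ K * ∫ s in (0:ℝ)..u, ∫ z in s..w, dbar s z) :
    ∀ n : ℕ, ∀ u ∈ Set.Icc (0:ℝ) T, ∀ w ≥ u,
      dbar u w ≤ M * K ^ n * (u * w) ^ n / ((Nat.factorial n : ℝ)) ^ 2 := by
  intro n
  induction n with
  | zero =>
    intro u hu w hw
    simpa using (hrange u hu w hw).2
  | succ n ih =>
    intro u hu w hw
    have hM : 0 ≤ M := (hrange u hu w hw).1.trans (hrange u hu w hw).2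
    have hsub : ∀ s ∈ Icc 0 u, s ∈ Icc 0 T := fun s hs => ⟨hs.1, hs.2.trans hu.2⟩
    have double_le := integral_integral_le_of_le_mul_pow (C := M * K ^ n / (n.factorial : ℝ) ^ 2)
      (by positivity) hu.1 hw fun s hs z hz =>
        ⟨(hrange s (hsub s hs) z hz.1).1, (ih s (hsub s hs) z hz.1).trans_eq (by ring)⟩
    calc dbar u w ≤ K * ∫ s in (0:ℝ)..u, ∫ z in s..w, dbar s z := hineq u hu w hw
      _ ≤ K * (M * K ^ n / (n.factorial : ℝ) ^ 2 * (u * w) ^ (n + 1) / (n + 1) ^ 2) := by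
          gcongr
      _ = M * K ^ (n + 1) * (u * w) ^ (n + 1) / ((n + 1).factorial : ℝ) ^ 2 := by
          rw [Nat.factorial_succ]
          push_cast
          field_simp
          ring

/-- Let `T* > 0`, `K > 0`, `M > 0`, and let `d̄` be a measurable function
on `{(u,w) : u ∈ [0,T*], w ≥ u}` with values in `[0,M]` satisfying
`d̄(u,w) ≤ K ∫₀ᵘ ∫ₛʷ d̄(s,z) dz ds` on this set. Then for every `n` and all `(u,w)` in the
set, `d̄(u,w) ≤ M Kⁿ (u·w)ⁿ / (n!)²`. -/
theorem gronwall_type_iteration_bound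
    (T K M : ℝ) (hT : 0 < T) (hK : 0 < K) (hM : 0 < M)
    (dbar : ℝ → ℝ → ℝ) (hmeas : Measurable (Function.uncurry dbar))
    (hrange : ∀ u ∈ Set.Icc (0:ℝ) T, ∀ w ≥ u, 0 ≤ dbar u w ∧ dbar u w ≤ M)
    (hineq : ∀ u ∈ Set.Icc (0:ℝ) T, ∀ w ≥ u,
      dbar u w ≤ K * ∫ s in (0:ℝ)..u, ∫ z in s..w, dbar s z) :
    ∀ n : ℕ, ∀ u ∈ Set.Icc (0:ℝ) T, ∀ w ≥ u,
      dbar u w ≤ M * K ^ n * (u * w) ^ n / ((Nat.factorial n : ℝ)) ^ 2 :=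
  gronwall_type_iteration_bound_general T K M hK dbar hrange hineq
end

section
/- Let T* > 0, γ > 0, λ̲, λ̄, b̄ > 0 and let λ̃ : [0,T*] × [0,∞) → ℝ be measurable with λ̲ ≤ λ̃(t,x) ≤ λ̄, let b̃ : [0,T*] × [0,∞) → [0,∞) be measurable with b̃ ≤ b̄, let r₀ : [0,∞) → [0,∞) be measurable with r₀* := sup_{x≥0} r₀(x) < ∞, and let J′ : [0,∞) → ℝ be nondecreasing and Lipschitz continuous on [0,∞). If r₁, r₂ ∈ 𝕃^{2,γ}_+ both satisfy the operator equation r = 𝒦r on [0,T*] × [0,∞), then r₁(t,x) = r₂(t,x) for all t ∈ [0,T*] and x ≥ 0. -/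
open MeasureTheory Set Filter

/-- The weighted `L²` norm `‖f‖_{L^{2,γ}} = (∫₀^∞ f(x)² e^{γx} dx)^{1/2}`. -/
noncomputable def L2wNorm (γ : ℝ) (f : ℝ → ℝ) : ℝ :=
  Real.sqrt (∫ x in Set.Ioi (0:ℝ), (f x) ^ 2 * Real.exp (γ * x))

/-- Membership in `𝕃^{2,γ}_+`: nonnegative, jointly measurable, with
`sup_{t ∈ [0,T*]} ‖h(t,·)‖_{L^{2,γ}} < ∞`. -/
def MemLL2 (T γ : ℝ) (h : ℝ → ℝ → ℝ) : Prop :=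
  (∀ t x, 0 ≤ h t x) ∧ Measurable (Function.uncurry h) ∧
    (∀ t ∈ Set.Icc (0:ℝ) T, MeasureTheory.IntegrableOn
      (fun x => (h t x) ^ 2 * Real.exp (γ * x)) (Set.Ioi 0)) ∧
    BddAbove ((fun t => L2wNorm γ (h t)) '' Set.Icc 0 T)

/-- The norm `‖h‖_{𝕃^{2,γ}} = sup_{t ∈ [0,T*]} ‖h(t,·)‖_{L^{2,γ}}`. -/
noncomputable def LL2Norm (T γ : ℝ) (h : ℝ → ℝ → ℝ) : ℝ :=
  sSup ((fun t => L2wNorm γ (h t)) '' Set.Icc 0 T)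

/-- The HJMM fixed-point operator `𝒦`:
`(𝒦h)(t,x) = r₀(t+x) b̃(t,x) exp(∫₀ᵗ J′(∫₀^{t−s+x} λ̃(s,v) h(s,v) dv) λ̃(s,t−s+x) ds)`. -/
noncomputable def Kop (r₀ : ℝ → ℝ) (b lam : ℝ → ℝ → ℝ) (J' : ℝ → ℝ)
    (h : ℝ → ℝ → ℝ) : ℝ → ℝ → ℝ := fun t x =>
  r₀ (t + x) * b t x *
    Real.exp (∫ s in (0:ℝ)..t,
      J' (∫ v in (0:ℝ)..(t - s + x), lam s v * h s v) * lam s (t - s + x))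

open Function

/-!
Let `Δ(t) = ‖r₁(t) - r₂(t)‖_{L^{2,γ}}`. Writing `rᵢ = p exp Aᵢ` with `p = r₀(t+x) b̃(t,x) ≥ 0`,
the bound `|eᵃ - eᵇ| ≤ (eᵃ + eᵇ) |a - b|` gives `|r₁ - r₂| ≤ |A₁ - A₂| (r₁ + r₂)` pointwise.
At time `s` the arguments of `J′` in `A₁` and `A₂` differ by at most
`λ̄ ∫₀^∞ |r₁(s) - r₂(s)| ≤ λ̄ Δ(s) / √γ` (weighted Cauchy–Schwarz),
so `|A₁ - A₂| ≤ L λ̄² γ^{-1/2} ∫₀ᵗ Δ`.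
Taking the `L^{2,γ}` norm in `x` yields `Δ(t) ≤ C ∫₀ᵗ Δ`; as `Δ` is bounded, iterating gives
`Δ(t) ≤ M (Ct)ⁿ / n! → 0`. Finally `r₁(s) = r₂(s)` a.e. already forces `𝒦r₁ = 𝒦r₂` everywhere.
-/

theorem abs_mul_exp_sub_mul_exp_le {p : ℝ} (hp : 0 ≤ p) (a b : ℝ) :
    |p * Real.exp a - p * Real.exp b| ≤ (p * Real.exp a + p * Real.exp b) * |a - b| := by
  wlog hba : b ≤ a generalizing a b
  · rw [abs_sub_comm, abs_sub_comm a, add_comm]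
    exact this b a (le_of_not_ge hba)
  have hexp : Real.exp a - Real.exp b ≤ Real.exp a * (a - b) := by
    have h := Real.add_one_le_exp (b - a)
    rw [Real.exp_sub, le_div_iff₀ (Real.exp_pos a)] at h
    nlinarith
  rw [← mul_sub, abs_mul, abs_of_nonneg hp, abs_of_nonneg (sub_nonneg.2 (Real.exp_le_exp.2 hba)),
    abs_of_nonneg (sub_nonneg.2 hba)]
  nlinarith [Real.exp_pos b, mul_le_mul_of_nonneg_left hexp hp,
    mul_nonneg (mul_nonneg hp (Real.exp_pos b).le) (sub_nonneg.2 hba)]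

theorem le_mul_pow_div_factorial_of_le_mul_integral {φ : ℝ → ℝ} {T C M : ℝ} (hC : 0 ≤ C)
    (hφ : ∀ t ∈ Icc 0 T, 0 ≤ φ t ∧ φ t ≤ M) (hint : IntegrableOn φ (Icc 0 T))
    (h : ∀ t ∈ Icc 0 T, φ t ≤ C * ∫ s in (0:ℝ)..t, φ s) (n : ℕ) :
    ∀ t ∈ Icc 0 T, φ t ≤ M * (C * t) ^ n / n.factorial := by
  induction n with
  | zero => simpa using fun t ht => (hφ t ht).2
  | succ n ih =>
    intro t ht
    have hsub : Icc 0 t ⊆ Icc 0 T := Icc_subset_Icc le_rfl ht.2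
    have hmono : ∫ s in (0:ℝ)..t, φ s ≤ ∫ s in (0:ℝ)..t, M * C ^ n / n.factorial * s ^ n :=
      intervalIntegral.integral_mono_on ht.1
        ((intervalIntegrable_iff_integrableOn_Icc_of_le ht.1).2 (hint.mono_set hsub))
        (by apply Continuous.intervalIntegrable; fun_prop)
        fun s hs => (ih s (hsub hs)).trans_eq (by rw [mul_pow]; ring)
    calc φ t ≤ C * ∫ s in (0:ℝ)..t, φ s := h t ht
      _ ≤ C * ∫ s in (0:ℝ)..t, M * C ^ n / n.factorial * s ^ n := by gcongr
      _ = M * (C * t) ^ (n + 1) / (n + 1).factorial := by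
        rw [intervalIntegral.integral_const_mul, integral_pow, Nat.factorial_succ]
        push_cast
        field_simp
        ring

theorem eq_zero_of_le_mul_integral {φ : ℝ → ℝ} {T C M : ℝ} (hC : 0 ≤ C)
    (hφ : ∀ t ∈ Icc 0 T, 0 ≤ φ t ∧ φ t ≤ M) (hint : IntegrableOn φ (Icc 0 T))
    (h : ∀ t ∈ Icc 0 T, φ t ≤ C * ∫ s in (0:ℝ)..t, φ s) :
    ∀ t ∈ Icc 0 T, φ t = 0 := by
  intro t ht
  refine le_antisymm (ge_of_tendsto' (x := atTop) ?_ fun n =>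
    le_mul_pow_div_factorial_of_le_mul_integral hC hφ hint h n t ht) (hφ t ht).1
  simpa [mul_div_assoc] using
    (FloorSemiring.tendsto_pow_div_factorial_atTop (K := ℝ) (C * t)).const_mul M

theorem measurable_setIntegral_Ioc_of_uncurry {f : ℝ → ℝ → ℝ} (hf : Measurable (uncurry f))
    {a c : ℝ → ℝ} (ha : Measurable a) (hc : Measurable c) :
    Measurable fun s => ∫ v in Ioc (a s) (c s), f s v := by
  have hS : MeasurableSet {p : ℝ × ℝ | a p.1 < p.2 ∧ p.2 ≤ c p.1} :=
    (measurableSet_lt (ha.comp measurable_fst) measurable_snd).inter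
      (measurableSet_le measurable_snd (hc.comp measurable_fst))
  convert ((hf.indicator hS).stronglyMeasurable.integral_prod_right' (ν := volume)).measurable
    using 2 with s
  rw [← integral_indicator measurableSet_Ioc]
  rfl

theorem measurable_intervalIntegral_of_uncurry {f : ℝ → ℝ → ℝ} (hf : Measurable (uncurry f))
    {a c : ℝ → ℝ} (ha : Measurable a) (hc : Measurable c) :
    Measurable fun s => ∫ v in a s..c s, f s v :=
  (measurable_setIntegral_Ioc_of_uncurry hf ha hc).sub
    (measurable_setIntegral_Ioc_of_uncurry hf hc ha)

theorem measurable_L2wNorm (γ : ℝ) {u : ℝ → ℝ → ℝ} (hu : Measurable (uncurry u)) :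
    Measurable fun t => L2wNorm γ (u t) :=
  Real.continuous_sqrt.measurable.comp
    (((hu.pow_const 2).mul (by fun_prop)).stronglyMeasurable.integral_prod_right'
      (ν := volume.restrict (Ioi 0))
      (f := fun p : ℝ × ℝ => u p.1 p.2 ^ 2 * Real.exp (γ * p.2))).measurable

theorem sq_le_two_mul_sq_add_sq_of_abs_le_add {a b c : ℝ} (h : |c| ≤ |a| + |b|) :
    c ^ 2 ≤ 2 * (a ^ 2 + b ^ 2) := by
  have := sq_le_sq' (by linarith [abs_nonneg c]) h
  nlinarith [sq_abs a, sq_abs b, sq_abs c, sq_nonneg (|a| - |b|)]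

theorem sq_L2wNorm (γ : ℝ) (f : ℝ → ℝ) :
    L2wNorm γ f ^ 2 = ∫ x in Ioi (0:ℝ), f x ^ 2 * Real.exp (γ * x) :=
  Real.sq_sqrt (setIntegral_nonneg measurableSet_Ioi fun _ _ => by positivity)

theorem L2wNorm_nonneg (γ : ℝ) (f : ℝ → ℝ) : 0 ≤ L2wNorm γ f := Real.sqrt_nonneg _

/-- `f ∈ L^{2,γ}(0,∞)`; unlike `MemLp`, this does not include measurability of `f`. -/
def MemL2w (γ : ℝ) (f : ℝ → ℝ) : Prop :=
  IntegrableOn (fun x => f x ^ 2 * Real.exp (γ * x)) (Ioi 0)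

section WeightedL2

variable {γ : ℝ} {f g u : ℝ → ℝ}

theorem L2wNorm_le_mul_of_abs_le {k : ℝ} (hk : 0 ≤ k) (hg : MemL2w γ g)
    (h : ∀ x > 0, |f x| ≤ k * |g x|) : L2wNorm γ f ≤ k * L2wNorm γ g := by
  rw [L2wNorm, L2wNorm, ← Real.sqrt_sq hk, ← Real.sqrt_mul (sq_nonneg k), ← integral_const_mul]
  refine Real.sqrt_le_sqrt (integral_mono_of_nonneg (Eventually.of_forall fun x => by positivity)
    (hg.const_mul _) ((ae_restrict_iff' measurableSet_Ioi).2 (Eventually.of_forall fun x hx => ?_)))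
  have hfg : f x ^ 2 ≤ k ^ 2 * g x ^ 2 := by
    rw [← sq_abs (f x), ← sq_abs (g x), ← mul_pow]
    exact pow_le_pow_left₀ (abs_nonneg _) (h x hx) 2
  dsimp only
  nlinarith [Real.exp_pos (γ * x)]

theorem MemL2w.of_abs_le_add (hu : AEStronglyMeasurable u (volume.restrict (Ioi 0)))
    (hf : MemL2w γ f) (hg : MemL2w γ g) (h : ∀ x, |u x| ≤ |f x| + |g x|) : MemL2w γ u := by
  refine Integrable.mono' ((Integrable.add hf hg).const_mul 2) ((hu.pow 2).mul (by fun_prop))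
    (Eventually.of_forall fun x => ?_)
  rw [Real.norm_of_nonneg (by positivity), Pi.add_apply]
  nlinarith [Real.exp_pos (γ * x), sq_le_two_mul_sq_add_sq_of_abs_le_add (h x)]

theorem MemL2w.add (hfm : Measurable f) (hgm : Measurable g)
    (hf : MemL2w γ f) (hg : MemL2w γ g) : MemL2w γ (f + g) :=
  MemL2w.of_abs_le_add (hfm.add hgm).aestronglyMeasurable hf hg fun _ => abs_add_le _ _

theorem MemL2w.sub (hfm : Measurable f) (hgm : Measurable g)
    (hf : MemL2w γ f) (hg : MemL2w γ g) : MemL2w γ (f - g) :=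
  MemL2w.of_abs_le_add (hfm.sub hgm).aestronglyMeasurable hf hg fun _ => abs_sub _ _

theorem sq_L2wNorm_le_of_abs_le_add (hf : MemL2w γ f) (hg : MemL2w γ g)
    (h : ∀ x, |u x| ≤ |f x| + |g x|) :
    L2wNorm γ u ^ 2 ≤ 2 * (L2wNorm γ f ^ 2 + L2wNorm γ g ^ 2) := by
  rw [sq_L2wNorm, sq_L2wNorm, sq_L2wNorm, ← integral_add hf hg, ← integral_const_mul]
  refine integral_mono_of_nonneg (Eventually.of_forall fun x => by positivity)
    ((Integrable.add hf hg).const_mul 2) (Eventually.of_forall fun x => ?_)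
  dsimp only
  nlinarith [Real.exp_pos (γ * x), sq_le_two_mul_sq_add_sq_of_abs_le_add (h x)]

theorem MemL2w.ae_eq_zero_of_L2wNorm_eq_zero (hf : MemL2w γ f)
    (h0 : L2wNorm γ f = 0) : f =ᵐ[volume.restrict (Ioi 0)] 0 := by
  have hint : ∫ x in Ioi (0:ℝ), f x ^ 2 * Real.exp (γ * x) = 0 := by
    rw [← sq_L2wNorm, h0, sq, mul_zero]
  filter_upwards [(integral_eq_zero_iff_of_nonneg (fun x => by positivity) hf).1 hint] with x hx
  simpa [(Real.exp_pos _).ne'] using hx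

theorem MemL2w.memLp_mul_exp (hfm : AEStronglyMeasurable f (volume.restrict (Ioi 0)))
    (hf : MemL2w γ f) :
    MemLp (fun x => f x * Real.exp (γ / 2 * x)) 2 (volume.restrict (Ioi 0)) := by
  refine (memLp_two_iff_integrable_sq (hfm.mul (by fun_prop))).2 (hf.congr_fun (fun x _ => ?_)
    measurableSet_Ioi)
  simp only [Pi.mul_apply, mul_pow, ← Real.exp_nat_mul]
  ring_nf

theorem memLp_exp_neg_mul (hγ : 0 < γ) :
    MemLp (fun x => Real.exp (-(γ / 2) * x)) 2 (volume.restrict (Ioi 0)) := by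
  refine (memLp_two_iff_integrable_sq (by fun_prop)).2
    ((exp_neg_integrableOn_Ioi 0 hγ).congr_fun (fun x _ => ?_) measurableSet_Ioi)
  rw [← Real.exp_nat_mul]
  ring_nf

theorem mul_exp_mul_exp_neg (γ a x : ℝ) :
    a * Real.exp (γ / 2 * x) * Real.exp (-(γ / 2) * x) = a := by
  rw [mul_assoc, ← Real.exp_add, neg_mul, add_neg_cancel, Real.exp_zero, mul_one]

theorem MemL2w.integrableOn_Ioi (hγ : 0 < γ)
    (hfm : AEStronglyMeasurable f (volume.restrict (Ioi 0))) (hf : MemL2w γ f) :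
    IntegrableOn f (Ioi 0) :=
  ((hf.memLp_mul_exp hfm).integrable_mul (memLp_exp_neg_mul hγ)).congr
    (Eventually.of_forall fun x => mul_exp_mul_exp_neg γ (f x) x)

theorem integral_abs_le_L2wNorm_div_sqrt (hγ : 0 < γ)
    (hfm : AEStronglyMeasurable f (volume.restrict (Ioi 0))) (hf : MemL2w γ f) :
    ∫ x in Ioi (0:ℝ), |f x| ≤ L2wNorm γ f / Real.sqrt γ := by
  have habs : MemL2w γ (fun x => |f x|) := by simpa only [MemL2w, sq_abs] using hf
  have hholder := integral_mul_le_Lp_mul_Lq_of_nonneg Real.HolderConjugate.two_two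
    (f := fun x => |f x| * Real.exp (γ / 2 * x)) (g := fun x => Real.exp (-(γ / 2) * x))
    (Eventually.of_forall fun x => by positivity) (Eventually.of_forall fun x => by positivity)
    (by simpa using habs.memLp_mul_exp hfm.norm) (by simpa using memLp_exp_neg_mul hγ)
  have hexp_int : ∫ x in Ioi (0:ℝ), Real.exp (-γ * x) = 1 / γ := by
    rw [integral_exp_mul_Ioi (neg_lt_zero.2 hγ)]
    simp
  have htwo : ∀ x : ℝ, ((2:ℕ):ℝ) * (γ / 2 * x) = γ * x := fun x => by push_cast; ring
  have htwo' : ∀ x : ℝ, ((2:ℕ):ℝ) * (-(γ / 2) * x) = -γ * x := fun x => by push_cast; ring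
  simp only [mul_exp_mul_exp_neg, Real.rpow_two, mul_pow, ← Real.exp_nat_mul, sq_abs, htwo, htwo',
    ← Real.sqrt_eq_rpow, hexp_int] at hholder
  rwa [Real.sqrt_div' 1 hγ.le, Real.sqrt_one, ← div_eq_mul_one_div] at hholder

theorem MemL2w.intervalIntegrable_mul (hγ : 0 < γ) {a : ℝ → ℝ} {A c : ℝ} (ha : Measurable a)
    (hA : ∀ v > 0, |a v| ≤ A) (hfm : Measurable f) (hf : MemL2w γ f) (hc : 0 ≤ c) :
    IntervalIntegrable (fun v => a v * f v) volume 0 c := by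
  refine (intervalIntegrable_iff_integrableOn_Ioc_of_le hc).2 ?_
  refine ((hf.integrableOn_Ioi hγ hfm.aestronglyMeasurable).mono_set Ioc_subset_Ioi_self).bdd_mul
    ha.aestronglyMeasurable ((ae_restrict_iff' measurableSet_Ioc).2 (Eventually.of_forall
      fun v hv => hA v hv.1))

theorem MemL2w.abs_intervalIntegral_mul_le (hγ : 0 < γ) {a : ℝ → ℝ} {A c : ℝ}
    (hA : ∀ v > 0, |a v| ≤ A) (hfm : Measurable f) (hf : MemL2w γ f) (hc : 0 ≤ c) :
    |∫ v in (0:ℝ)..c, a v * f v| ≤ A * (L2wNorm γ f / Real.sqrt γ) := by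
  have hfi := hf.integrableOn_Ioi hγ hfm.aestronglyMeasurable
  have hA0 : 0 ≤ A := (abs_nonneg _).trans (hA 1 one_pos)
  calc |∫ v in (0:ℝ)..c, a v * f v|
      ≤ ∫ v in (0:ℝ)..c, A * |f v| :=
        intervalIntegral.norm_integral_le_of_norm_le hc (Eventually.of_forall fun v hv => by
          rw [Real.norm_eq_abs, abs_mul]
          exact mul_le_mul_of_nonneg_right (hA v hv.1) (abs_nonneg _))
          ((intervalIntegrable_iff_integrableOn_Ioc_of_le hc).2
            ((hfi.mono_set Ioc_subset_Ioi_self).abs.const_mul A))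
    _ = A * ∫ v in Ioc (0:ℝ) c, |f v| := by
        rw [intervalIntegral.integral_const_mul, intervalIntegral.integral_of_le hc]
    _ ≤ A * ∫ v in Ioi (0:ℝ), |f v| := by
        refine mul_le_mul_of_nonneg_left ?_ hA0
        exact setIntegral_mono_set hfi.abs (Eventually.of_forall fun v => abs_nonneg _)
          Ioc_subset_Ioi_self.eventuallyLE
    _ ≤ A * (L2wNorm γ f / Real.sqrt γ) := by
        gcongr
        exact integral_abs_le_L2wNorm_div_sqrt hγ hfm.aestronglyMeasurable hf

end WeightedL2

theorem abs_sub_comp_intervalIntegral_mul_le {γ A c : ℝ} {L : NNReal} {J a f₁ f₂ : ℝ → ℝ}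
    (hγ : 0 < γ) (hJ : LipschitzOnWith L J (Ici 0)) (ha : Measurable a)
    (hA : ∀ v ≥ 0, 0 ≤ a v ∧ a v ≤ A) (hf₁m : Measurable f₁) (hf₂m : Measurable f₂)
    (hf₁ : MemL2w γ f₁) (hf₂ : MemL2w γ f₂) (hf₁0 : ∀ v, 0 ≤ f₁ v) (hf₂0 : ∀ v, 0 ≤ f₂ v)
    (hc : 0 ≤ c) :
    |J (∫ v in (0:ℝ)..c, a v * f₁ v) - J (∫ v in (0:ℝ)..c, a v * f₂ v)| ≤
      L * (A * (L2wNorm γ (f₁ - f₂) / Real.sqrt γ)) := by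
  have habs : ∀ v > 0, |a v| ≤ A := fun v hv =>
    abs_le.2 ⟨by linarith [hA v hv.le], (hA v hv.le).2⟩
  have hnonneg : ∀ f : ℝ → ℝ, (∀ v, 0 ≤ f v) → ∫ v in (0:ℝ)..c, a v * f v ∈ Ici 0 :=
    fun f hf => intervalIntegral.integral_nonneg hc fun v hv => mul_nonneg (hA v hv.1).1 (hf v)
  have hdiff : (∫ v in (0:ℝ)..c, a v * f₁ v) - ∫ v in (0:ℝ)..c, a v * f₂ v =
      ∫ v in (0:ℝ)..c, a v * (f₁ - f₂) v := by
    simp only [Pi.sub_apply, mul_sub]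
    exact (intervalIntegral.integral_sub (hf₁.intervalIntegrable_mul hγ ha habs hf₁m hc)
      (hf₂.intervalIntegrable_mul hγ ha habs hf₂m hc)).symm
  calc _ ≤ L * |(∫ v in (0:ℝ)..c, a v * f₁ v) - ∫ v in (0:ℝ)..c, a v * f₂ v| := by
        simpa only [Real.dist_eq] using hJ.dist_le_mul _ (hnonneg f₁ hf₁0) _ (hnonneg f₂ hf₂0)
    _ ≤ L * (A * (L2wNorm γ (f₁ - f₂) / Real.sqrt γ)) := by
        rw [hdiff]
        gcongr
        exact (hf₁.sub hf₁m hf₂m hf₂).abs_intervalIntegral_mul_le hγ habs (hf₁m.sub hf₂m) hc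

theorem MemLL2.mono {T T' γ : ℝ} {h : ℝ → ℝ → ℝ} (hh : MemLL2 T γ h) (hT : T' ≤ T) :
    MemLL2 T' γ h := by
  obtain ⟨hnn, hm, hL2, hbdd⟩ := hh
  have hsub : Icc 0 T' ⊆ Icc 0 T := Icc_subset_Icc le_rfl hT
  exact ⟨hnn, hm, fun t ht => hL2 t (hsub ht), hbdd.mono (image_mono hsub)⟩

theorem MemLL2.bddAbove_L2wNorm_of_abs_le_add {T γ : ℝ} {u h₁ h₂ : ℝ → ℝ → ℝ}
    (hh₁ : MemLL2 T γ h₁) (hh₂ : MemLL2 T γ h₂) (hu : ∀ t x, |u t x| ≤ |h₁ t x| + |h₂ t x|) :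
    BddAbove ((fun t => L2wNorm γ (u t)) '' Icc 0 T) := by
  obtain ⟨K₁, hK₁⟩ := hh₁.2.2.2
  obtain ⟨K₂, hK₂⟩ := hh₂.2.2.2
  refine ⟨Real.sqrt (2 * (K₁ ^ 2 + K₂ ^ 2)), forall_mem_image.2 fun t ht =>
    (le_abs_self _).trans (Real.abs_le_sqrt ?_)⟩
  have hb₁ := hK₁ (mem_image_of_mem _ ht)
  have hb₂ := hK₂ (mem_image_of_mem _ ht)
  have := sq_L2wNorm_le_of_abs_le_add (hh₁.2.2.1 t ht) (hh₂.2.2.1 t ht) (hu t)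
  nlinarith [L2wNorm_nonneg γ (h₁ t), L2wNorm_nonneg γ (h₂ t)]

theorem integrableOn_L2wNorm_of_bddAbove {T γ : ℝ} {u : ℝ → ℝ → ℝ} (hu : Measurable (uncurry u))
    (hbdd : BddAbove ((fun t => L2wNorm γ (u t)) '' Icc 0 T)) :
    IntegrableOn (fun t => L2wNorm γ (u t)) (Icc 0 T) := by
  obtain ⟨M, hM⟩ := hbdd
  refine Measure.integrableOn_of_bounded (M := M) measure_Icc_lt_top.ne
    (measurable_L2wNorm γ hu).aestronglyMeasurable
    ((ae_restrict_iff' measurableSet_Icc).2 (Eventually.of_forall fun t ht => ?_))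
  rw [Real.norm_of_nonneg (L2wNorm_nonneg _ _)]
  exact hM (mem_image_of_mem _ ht)

noncomputable def KopExponent (lam : ℝ → ℝ → ℝ) (J' : ℝ → ℝ) (h : ℝ → ℝ → ℝ) (t x : ℝ) : ℝ :=
  ∫ s in (0:ℝ)..t, J' (∫ v in (0:ℝ)..(t - s + x), lam s v * h s v) * lam s (t - s + x)

theorem Kop_eq_mul_exp (r₀ : ℝ → ℝ) (b lam : ℝ → ℝ → ℝ) (J' : ℝ → ℝ) (h : ℝ → ℝ → ℝ) (t x : ℝ) :
    Kop r₀ b lam J' h t x = r₀ (t + x) * b t x * Real.exp (KopExponent lam J' h t x) := rfl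

theorem abs_Kop_sub_le {r₀ : ℝ → ℝ} {b lam : ℝ → ℝ → ℝ} {J' : ℝ → ℝ} {h₁ h₂ : ℝ → ℝ → ℝ}
    {t x : ℝ} (hp : 0 ≤ r₀ (t + x) * b t x) :
    |Kop r₀ b lam J' h₁ t x - Kop r₀ b lam J' h₂ t x| ≤
      |KopExponent lam J' h₁ t x - KopExponent lam J' h₂ t x| *
        |Kop r₀ b lam J' h₁ t x + Kop r₀ b lam J' h₂ t x| := by
  have hsum : 0 ≤ r₀ (t + x) * b t x * Real.exp (KopExponent lam J' h₁ t x) +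
      r₀ (t + x) * b t x * Real.exp (KopExponent lam J' h₂ t x) := by positivity
  rw [Kop_eq_mul_exp, Kop_eq_mul_exp, abs_of_nonneg hsum, mul_comm |_ - _|]
  exact abs_mul_exp_sub_mul_exp_le hp _ _

section KopExponent

variable {γ Λ t x : ℝ} {L : NNReal} {lam : ℝ → ℝ → ℝ} {J' : ℝ → ℝ} {h h₁ h₂ : ℝ → ℝ → ℝ}

theorem KopExponent_congr (ht : 0 ≤ t) (hx : 0 ≤ x)
    (heq : ∀ s ∈ Icc 0 t, h₁ s =ᵐ[volume.restrict (Ioi 0)] h₂ s) :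
    KopExponent lam J' h₁ t x = KopExponent lam J' h₂ t x := by
  refine intervalIntegral.integral_congr fun s hs => ?_
  rw [uIcc_of_le ht] at hs
  have hc : 0 ≤ t - s + x := by linarith [hs.2]
  have hinner : ∫ v in (0:ℝ)..(t - s + x), lam s v * h₁ s v =
      ∫ v in (0:ℝ)..(t - s + x), lam s v * h₂ s v :=
    intervalIntegral.integral_congr_ae (((ae_restrict_iff' measurableSet_Ioi).1 (heq s hs)).mono
      fun v hv hv' => by rw [uIoc_of_le hc] at hv'; rw [hv hv'.1])
  simp only [hinner]

theorem intervalIntegrable_KopExponent_integrand (hγ : 0 < γ) (ht : 0 ≤ t) (hx : 0 ≤ x)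
    (hlamm : Measurable (uncurry lam)) (hlam : ∀ s ∈ Icc 0 t, ∀ v ≥ 0, 0 ≤ lam s v ∧ lam s v ≤ Λ)
    (hJ : LipschitzOnWith L J' (Ici 0)) (hh : MemLL2 t γ h) :
    IntervalIntegrable
      (fun s => J' (∫ v in (0:ℝ)..(t - s + x), lam s v * h s v) * lam s (t - s + x))
      volume 0 t := by
  obtain ⟨hnn, hm, hL2, K, hK⟩ := hh
  -- `J'` is only controlled on `[0, ∞)`; its Lipschitz extension makes the integrand measurable.
  obtain ⟨J, hJL, hJeq⟩ := hJ.extend_real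
  set F := fun s => ∫ v in (0:ℝ)..(t - s + x), lam s v * h s v
  have hFm : Measurable F := measurable_intervalIntegral_of_uncurry
    (f := fun s v => lam s v * h s v) (hlamm.mul hm) measurable_const (by fun_prop)
  have hΛ : ∀ s ∈ Icc 0 t, 0 ≤ Λ := fun s hs => (hlam s hs 0 le_rfl).1.trans (hlam s hs 0 le_rfl).2
  have hF : ∀ s ∈ Icc 0 t, 0 ≤ F s ∧ |F s| ≤ Λ * (K / Real.sqrt γ) := by
    intro s hs
    have hc : 0 ≤ t - s + x := by linarith [hs.2]
    refine ⟨intervalIntegral.integral_nonneg hc fun v hv =>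
      mul_nonneg (hlam s hs v hv.1).1 (hnn s v), ?_⟩
    calc |F s| ≤ Λ * (L2wNorm γ (h s) / Real.sqrt γ) :=
          MemL2w.abs_intervalIntegral_mul_le hγ
            (fun v hv => abs_le.2 ⟨by linarith [hlam s hs v hv.le], (hlam s hs v hv.le).2⟩)
            hm.of_uncurry_left (hL2 s hs) hc
      _ ≤ Λ * (K / Real.sqrt γ) := by
          gcongr
          · exact hΛ s hs
          · exact hK (mem_image_of_mem _ hs)
  have hJbound : ∀ y, |J y| ≤ |J 0| + L * |y| := fun y => by
    have := hJL.dist_le_mul y 0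
    rw [Real.dist_eq, Real.dist_eq, sub_zero] at this
    linarith [abs_sub_abs_le_abs_sub (J y) (J 0)]
  rw [intervalIntegrable_iff_integrableOn_Ioc_of_le ht]
  refine IntegrableOn.congr_fun (f := fun s => J (F s) * lam s (t - s + x)) ?_
    (fun s hs => ?_) measurableSet_Ioc
  · refine Measure.integrableOn_of_bounded (M := (|J 0| + L * (Λ * (K / Real.sqrt γ))) * Λ)
      measure_Ioc_lt_top.ne ((hJL.continuous.measurable.comp hFm).mul
        (hlamm.comp (measurable_id.prodMk (by fun_prop)))).aestronglyMeasurable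
      ((ae_restrict_iff' measurableSet_Ioc).2 (Eventually.of_forall fun s hs => ?_))
    have hs' : s ∈ Icc 0 t := Ioc_subset_Icc_self hs
    have hlam' := hlam s hs' (t - s + x) (by linarith [hs.2])
    have hJF : |J (F s)| ≤ |J 0| + L * (Λ * (K / Real.sqrt γ)) :=
      (hJbound _).trans (by gcongr; exact (hF s hs').2)
    rw [Real.norm_eq_abs, abs_mul, abs_of_nonneg hlam'.1]
    exact mul_le_mul hJF hlam'.2 hlam'.1 ((abs_nonneg _).trans hJF)
  · exact congrArg (· * lam s (t - s + x)) (hJeq (hF s (Ioc_subset_Icc_self hs)).1).symm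

theorem abs_KopExponent_sub_le (hγ : 0 < γ) (ht : 0 ≤ t) (hx : 0 ≤ x)
    (hlamm : Measurable (uncurry lam)) (hlam : ∀ s ∈ Icc 0 t, ∀ v ≥ 0, 0 ≤ lam s v ∧ lam s v ≤ Λ)
    (hJ : LipschitzOnWith L J' (Ici 0)) (hh₁ : MemLL2 t γ h₁) (hh₂ : MemLL2 t γ h₂)
    (hΔ : IntervalIntegrable (fun s => L2wNorm γ (h₁ s - h₂ s)) volume 0 t) :
    |KopExponent lam J' h₁ t x - KopExponent lam J' h₂ t x| ≤
      L * Λ ^ 2 / Real.sqrt γ * ∫ s in (0:ℝ)..t, L2wNorm γ (h₁ s - h₂ s) := by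
  rw [KopExponent, KopExponent, ← intervalIntegral.integral_sub
    (intervalIntegrable_KopExponent_integrand hγ ht hx hlamm hlam hJ hh₁)
    (intervalIntegrable_KopExponent_integrand hγ ht hx hlamm hlam hJ hh₂),
    ← intervalIntegral.integral_const_mul, ← Real.norm_eq_abs]
  refine intervalIntegral.norm_integral_le_of_norm_le ht (Eventually.of_forall fun s hs => ?_)
    (hΔ.const_mul _)
  have hs' : s ∈ Icc 0 t := Ioc_subset_Icc_self hs
  have hc : 0 ≤ t - s + x := by linarith [hs.2]
  have hlam' := hlam s hs' _ hc
  have hΛ : 0 ≤ Λ := hlam'.1.trans hlam'.2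
  have hinner := abs_sub_comp_intervalIntegral_mul_le hγ hJ hlamm.of_uncurry_left (hlam s hs')
    hh₁.2.1.of_uncurry_left hh₂.2.1.of_uncurry_left (hh₁.2.2.1 s hs') (hh₂.2.2.1 s hs')
    (hh₁.1 s) (hh₂.1 s) hc
  rw [Real.norm_eq_abs, ← sub_mul, abs_mul, abs_of_nonneg hlam'.1]
  calc _ ≤ L * (Λ * (L2wNorm γ (h₁ s - h₂ s) / Real.sqrt γ)) * Λ :=
        mul_le_mul hinner hlam'.2 hlam'.1 (by have := L2wNorm_nonneg γ (h₁ s - h₂ s); positivity)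
    _ = _ := by ring

end KopExponent

theorem L2wNorm_sub_le_mul_integral_of_eq_Kop {T γ Λ K : ℝ} {L : NNReal} {r₀ J' : ℝ → ℝ}
    {b lam r₁ r₂ : ℝ → ℝ → ℝ} (hγ : 0 < γ) (hlamm : Measurable (uncurry lam))
    (hlam : ∀ t ∈ Icc 0 T, ∀ x ≥ 0, 0 ≤ lam t x ∧ lam t x ≤ Λ)
    (hp : ∀ t ∈ Icc 0 T, ∀ x ≥ 0, 0 ≤ r₀ (t + x) * b t x) (hJ : LipschitzOnWith L J' (Ici 0))
    (hr₁ : MemLL2 T γ r₁) (hr₂ : MemLL2 T γ r₂)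
    (hfix₁ : ∀ t ∈ Icc 0 T, ∀ x ≥ 0, r₁ t x = Kop r₀ b lam J' r₁ t x)
    (hfix₂ : ∀ t ∈ Icc 0 T, ∀ x ≥ 0, r₂ t x = Kop r₀ b lam J' r₂ t x)
    (hK : ∀ t ∈ Icc 0 T, L2wNorm γ (r₁ t + r₂ t) ≤ K)
    (hΔ : IntegrableOn (fun t => L2wNorm γ (r₁ t - r₂ t)) (Icc 0 T)) (t : ℝ) (ht : t ∈ Icc 0 T) :
    L2wNorm γ (r₁ t - r₂ t) ≤
      K * (L * Λ ^ 2 / Real.sqrt γ) * ∫ s in (0:ℝ)..t, L2wNorm γ (r₁ s - r₂ s) := by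
  have hsub : Icc 0 t ⊆ Icc 0 T := Icc_subset_Icc le_rfl ht.2
  have hΔt : IntervalIntegrable (fun s => L2wNorm γ (r₁ s - r₂ s)) volume 0 t :=
    (intervalIntegrable_iff_integrableOn_Icc_of_le ht.1).2 (hΔ.mono_set hsub)
  have hE : 0 ≤ ∫ s in (0:ℝ)..t, L2wNorm γ (r₁ s - r₂ s) :=
    intervalIntegral.integral_nonneg ht.1 fun s _ => L2wNorm_nonneg _ _
  have hΛ : 0 ≤ Λ := (hlam t ht 0 le_rfl).1.trans (hlam t ht 0 le_rfl).2
  have hpointwise : ∀ x > 0, |r₁ t x - r₂ t x| ≤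
      L * Λ ^ 2 / Real.sqrt γ * (∫ s in (0:ℝ)..t, L2wNorm γ (r₁ s - r₂ s)) *
        |r₁ t x + r₂ t x| := by
    intro x hx
    have hexp := abs_KopExponent_sub_le hγ ht.1 hx.le hlamm (fun s hs => hlam s (hsub hs)) hJ
      (hr₁.mono ht.2) (hr₂.mono ht.2) hΔt
    have hKop := abs_Kop_sub_le (lam := lam) (J' := J') (h₁ := r₁) (h₂ := r₂) (hp t ht x hx.le)
    rw [← hfix₁ t ht x hx.le, ← hfix₂ t ht x hx.le] at hKop
    exact hKop.trans (mul_le_mul_of_nonneg_right hexp (abs_nonneg _))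
  calc L2wNorm γ (r₁ t - r₂ t)
      ≤ L * Λ ^ 2 / Real.sqrt γ * (∫ s in (0:ℝ)..t, L2wNorm γ (r₁ s - r₂ s)) *
          L2wNorm γ (r₁ t + r₂ t) :=
        L2wNorm_le_mul_of_abs_le (by positivity) (MemL2w.add hr₁.2.1.of_uncurry_left
          hr₂.2.1.of_uncurry_left (hr₁.2.2.1 t ht) (hr₂.2.2.1 t ht)) hpointwise
    _ ≤ L * Λ ^ 2 / Real.sqrt γ * (∫ s in (0:ℝ)..t, L2wNorm γ (r₁ s - r₂ s)) * K := by
        gcongr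
        exact hK t ht
    _ = _ := by ring

theorem Kop_fixed_point_unique_general
    (T γ lamLo lamHi bBar : ℝ) (hT : 0 < T) (hγ : 0 < γ)
    (hlamLo : 0 < lamLo)
    (lam : ℝ → ℝ → ℝ) (hlamMeas : Measurable (Function.uncurry lam))
    (hlam : ∀ t ∈ Set.Icc (0:ℝ) T, ∀ x ≥ (0:ℝ),
      lamLo ≤ lam t x ∧ lam t x ≤ lamHi)
    (b : ℝ → ℝ → ℝ)
    (hb : ∀ t ∈ Set.Icc (0:ℝ) T, ∀ x ≥ (0:ℝ), 0 ≤ b t x ∧ b t x ≤ bBar)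
    (r₀ : ℝ → ℝ) (hr₀pos : ∀ x ≥ (0:ℝ), 0 ≤ r₀ x)
    (J' : ℝ → ℝ)
    (hJlip : ∃ L : NNReal, LipschitzOnWith L J' (Set.Ici 0))
    (r₁ r₂ : ℝ → ℝ → ℝ) (hr₁ : MemLL2 T γ r₁) (hr₂ : MemLL2 T γ r₂)
    (hfix₁ : ∀ t ∈ Set.Icc (0:ℝ) T, ∀ x ≥ (0:ℝ),
      r₁ t x = Kop r₀ b lam J' r₁ t x)
    (hfix₂ : ∀ t ∈ Set.Icc (0:ℝ) T, ∀ x ≥ (0:ℝ),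
      r₂ t x = Kop r₀ b lam J' r₂ t x) :
    ∀ t ∈ Set.Icc (0:ℝ) T, ∀ x ≥ (0:ℝ), r₁ t x = r₂ t x := by
  obtain ⟨L, hJ⟩ := hJlip
  have hΔbdd := MemLL2.bddAbove_L2wNorm_of_abs_le_add (u := r₁ - r₂) hr₁ hr₂
    fun _ _ => abs_sub _ _
  obtain ⟨K, hK⟩ := MemLL2.bddAbove_L2wNorm_of_abs_le_add (u := r₁ + r₂) hr₁ hr₂
    fun _ _ => abs_add_le _ _
  have hK0 : 0 ≤ K := (L2wNorm_nonneg _ _).trans (hK (mem_image_of_mem _ ⟨le_rfl, hT.le⟩))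
  have hΔint := integrableOn_L2wNorm_of_bddAbove (u := r₁ - r₂) (hr₁.2.1.sub hr₂.2.1) hΔbdd
  obtain ⟨M, hM⟩ := hΔbdd
  have hΔ0 := eq_zero_of_le_mul_integral (C := K * (L * lamHi ^ 2 / Real.sqrt γ)) (by positivity)
    (fun t ht => ⟨L2wNorm_nonneg _ _, hM (mem_image_of_mem _ ht)⟩) hΔint
    (L2wNorm_sub_le_mul_integral_of_eq_Kop hγ hlamMeas
      (fun t ht x hx => ⟨hlamLo.le.trans (hlam t ht x hx).1, (hlam t ht x hx).2⟩)
      (fun t ht x hx => mul_nonneg (hr₀pos _ (by linarith [ht.1])) (hb t ht x hx).1)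
      hJ hr₁ hr₂ hfix₁ hfix₂ (fun t ht => hK (mem_image_of_mem _ ht)) hΔint)
  intro t ht x hx
  rw [hfix₁ t ht x hx, hfix₂ t ht x hx, Kop_eq_mul_exp, Kop_eq_mul_exp,
    KopExponent_congr ht.1 hx fun s hs => ?_]
  have hs : s ∈ Icc 0 T := ⟨hs.1, hs.2.trans ht.2⟩
  filter_upwards [(MemL2w.sub hr₁.2.1.of_uncurry_left hr₂.2.1.of_uncurry_left (hr₁.2.2.1 s hs)
    (hr₂.2.2.1 s hs)).ae_eq_zero_of_L2wNorm_eq_zero (hΔ0 s hs)] with v hv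
  exact sub_eq_zero.1 hv

/-- (Uniqueness) If `r₀` is bounded and `J′` is nondecreasing and
Lipschitz on `[0,∞)`, then any two solutions in `𝕃^{2,γ}_+` of the operator equation
`r = 𝒦r` coincide on `[0,T*] × [0,∞)`. -/
theorem Kop_fixed_point_unique
    (T γ lamLo lamHi bBar : ℝ) (hT : 0 < T) (hγ : 0 < γ)
    (hlamLo : 0 < lamLo) (hlamHi : 0 < lamHi) (hbBar : 0 < bBar)
    (lam : ℝ → ℝ → ℝ) (hlamMeas : Measurable (Function.uncurry lam))
    (hlam : ∀ t ∈ Set.Icc (0:ℝ) T, ∀ x ≥ (0:ℝ),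
      lamLo ≤ lam t x ∧ lam t x ≤ lamHi)
    (b : ℝ → ℝ → ℝ) (hbMeas : Measurable (Function.uncurry b))
    (hb : ∀ t ∈ Set.Icc (0:ℝ) T, ∀ x ≥ (0:ℝ), 0 ≤ b t x ∧ b t x ≤ bBar)
    (r₀ : ℝ → ℝ) (hr₀Meas : Measurable r₀) (hr₀pos : ∀ x ≥ (0:ℝ), 0 ≤ r₀ x)
    (hr₀bdd : BddAbove (r₀ '' Set.Ici 0))
    (J' : ℝ → ℝ) (hJmono : MonotoneOn J' (Set.Ici 0))
    (hJlip : ∃ L : NNReal, LipschitzOnWith L J' (Set.Ici 0))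
    (r₁ r₂ : ℝ → ℝ → ℝ) (hr₁ : MemLL2 T γ r₁) (hr₂ : MemLL2 T γ r₂)
    (hfix₁ : ∀ t ∈ Set.Icc (0:ℝ) T, ∀ x ≥ (0:ℝ),
      r₁ t x = Kop r₀ b lam J' r₁ t x)
    (hfix₂ : ∀ t ∈ Set.Icc (0:ℝ) T, ∀ x ≥ (0:ℝ),
      r₂ t x = Kop r₀ b lam J' r₂ t x) :
    ∀ t ∈ Set.Icc (0:ℝ) T, ∀ x ≥ (0:ℝ), r₁ t x = r₂ t x :=
  Kop_fixed_point_unique_general T γ lamLo lamHi bBar hT hγ hlamLo lam hlamMeas hlam b hb r₀ hr₀pos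
    J' hJlip r₁ r₂ hr₁ hr₂ hfix₁ hfix₂
end

section
/- Let T* > 0, γ > 0, λ̲, λ̄, b̄ > 0 and let λ̃ : [0,T*] × [0,∞) → ℝ be measurable with λ̲ ≤ λ̃(t,x) ≤ λ̄, let b̃ : [0,T*] × [0,∞) → [0,∞) be measurable with b̃ ≤ b̄, let r₀ : [0,∞) → [0,∞) be measurable with sup_{x≥0} r₀(x) < ∞, and let J′ : [0,∞) → ℝ be nondecreasing. If r ∈ 𝕃^{2,γ}_+ satisfies r = 𝒦r on [0,T*] × [0,∞), then r is bounded: sup_{t∈[0,T*], x≥0} r(t,x) ≤ (sup_{x≥0} r₀(x)) · b̄ · exp( |J′( (λ̄/√γ) ‖r‖_{𝕃^{2,γ}} )| · λ̄ T* ) < ∞. -/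
open MeasureTheory Set Filter

/-!
Writing `r = (r e^{γv/2}) e^{-γv/2}`, Cauchy–Schwarz gives
`0 ≤ ∫₀^L λ̃(s,v) r(s,v) dv ≤ λ̄ ∫₀^∞ r(s,v) dv ≤ (λ̄/√γ) ‖r‖_{𝕃^{2,γ}} =: M`
for every `s ∈ [0,T*]` and `L ≥ 0`. As `J′` is nondecreasing on `[0,∞)`, the integrand of the
exponent in `𝒦r` is at most `|J′(M)| λ̄`, so the exponent is at most `|J′(M)| λ̄ T*`, while the
prefactor `r₀(t+x) b̃(t,x)` is at most `(sup r₀) b̄`.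
-/

open Real

theorem integral_mul_le_sqrt_mul_sqrt_of_nonneg {α : Type*} [MeasurableSpace α]
    {μ : Measure α} {f g : α → ℝ} (hf0 : 0 ≤ᵐ[μ] f) (hg0 : 0 ≤ᵐ[μ] g)
    (hf : MemLp f 2 μ) (hg : MemLp g 2 μ) :
    ∫ a, f a * g a ∂μ ≤ √(∫ a, f a ^ 2 ∂μ) * √(∫ a, g a ^ 2 ∂μ) := by
  have := integral_mul_le_Lp_mul_Lq_of_nonneg Real.HolderConjugate.two_two hf0 hg0
    (by simpa using hf) (by simpa using hg)
  simpa only [Real.rpow_two, Real.sqrt_eq_rpow] using this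

section WeightedL2

variable {γ : ℝ} {f : ℝ → ℝ}

theorem mul_exp_half_sq (x : ℝ) : (f x * exp (γ * x / 2)) ^ 2 = f x ^ 2 * exp (γ * x) := by
  rw [mul_pow, ← exp_nat_mul]
  ring_nf

theorem exp_neg_half_sq (x : ℝ) : exp (-(γ * x / 2)) ^ 2 = exp (-γ * x) := by
  rw [← exp_nat_mul]
  ring_nf

theorem memLp_two_mul_exp_half (hf : Measurable f)
    (hfγ : IntegrableOn (fun x => f x ^ 2 * exp (γ * x)) (Ioi 0)) :
    MemLp (fun x => f x * exp (γ * x / 2)) 2 (volume.restrict (Ioi 0)) :=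
  (memLp_two_iff_integrable_sq (by fun_prop)).2 (by simp only [mul_exp_half_sq]; exact hfγ)

theorem memLp_two_exp_neg_half (hγ : 0 < γ) :
    MemLp (fun x => exp (-(γ * x / 2))) 2 (volume.restrict (Ioi 0)) :=
  (memLp_two_iff_integrable_sq (by fun_prop)).2
    (by simp only [exp_neg_half_sq]; exact exp_neg_integrableOn_Ioi 0 hγ)

theorem mul_exp_half_mul_exp_neg_half (x : ℝ) :
    f x * exp (γ * x / 2) * exp (-(γ * x / 2)) = f x := by
  rw [mul_assoc, ← exp_add, add_neg_cancel, exp_zero, mul_one]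

theorem integrableOn_Ioi_of_integrableOn_sq_mul_exp (hγ : 0 < γ) (hf : Measurable f)
    (hfγ : IntegrableOn (fun x => f x ^ 2 * exp (γ * x)) (Ioi 0)) :
    IntegrableOn f (Ioi 0) :=
  ((memLp_two_mul_exp_half hf hfγ).integrable_mul (memLp_two_exp_neg_half hγ)).congr
    (Eventually.of_forall mul_exp_half_mul_exp_neg_half)

theorem integral_Ioi_le_L2wNorm_div_sqrt (hγ : 0 < γ) (hf : Measurable f)
    (hf0 : ∀ x, 0 ≤ f x) (hfγ : IntegrableOn (fun x => f x ^ 2 * exp (γ * x)) (Ioi 0)) :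
    ∫ x in Ioi 0, f x ≤ L2wNorm γ f / √γ := by
  have hweight : ∫ x in Ioi 0, exp (-(γ * x / 2)) ^ 2 = γ⁻¹ := by
    simpa only [exp_neg_half_sq, mul_zero, exp_zero, neg_div_neg_eq, one_div]
      using integral_exp_mul_Ioi (neg_neg_of_pos hγ) 0
  calc ∫ x in Ioi 0, f x
      = ∫ x in Ioi 0, f x * exp (γ * x / 2) * exp (-(γ * x / 2)) := by
        simp only [mul_exp_half_mul_exp_neg_half]
    _ ≤ √(∫ x in Ioi 0, (f x * exp (γ * x / 2)) ^ 2) *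
          √(∫ x in Ioi 0, exp (-(γ * x / 2)) ^ 2) :=
        integral_mul_le_sqrt_mul_sqrt_of_nonneg
          (Eventually.of_forall fun x => mul_nonneg (hf0 x) (exp_pos _).le)
          (Eventually.of_forall fun x => (exp_pos _).le)
          (memLp_two_mul_exp_half hf hfγ) (memLp_two_exp_neg_half hγ)
    _ = L2wNorm γ f / √γ := by
        simp only [mul_exp_half_sq, hweight, sqrt_inv, ← div_eq_mul_inv, L2wNorm]

theorem intervalIntegral_mul_le_div_sqrt_mul_L2wNorm {a : ℝ → ℝ} {c L : ℝ} (hγ : 0 < γ)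
    (hL : 0 ≤ L) (ha : ∀ x ≥ 0, 0 ≤ a x ∧ a x ≤ c) (hf : Measurable f)
    (hf0 : ∀ x, 0 ≤ f x) (hfγ : IntegrableOn (fun x => f x ^ 2 * exp (γ * x)) (Ioi 0)) :
    ∫ x in 0..L, a x * f x ≤ c / √γ * L2wNorm γ f := by
  have hc : 0 ≤ c := (ha 0 le_rfl).1.trans (ha 0 le_rfl).2
  have hfi := integrableOn_Ioi_of_integrableOn_sq_mul_exp hγ hf hfγ
  rw [intervalIntegral.integral_of_le hL]
  calc ∫ x in Ioc 0 L, a x * f x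
      ≤ ∫ x in Ioc 0 L, c * f x :=
        integral_mono_of_nonneg
          (ae_restrict_of_forall_mem measurableSet_Ioc fun x hx =>
            mul_nonneg (ha x hx.1.le).1 (hf0 x))
          ((hfi.mono_set Ioc_subset_Ioi_self).const_mul c)
          (ae_restrict_of_forall_mem measurableSet_Ioc fun x hx =>
            mul_le_mul_of_nonneg_right (ha x hx.1.le).2 (hf0 x))
    _ = c * ∫ x in Ioc 0 L, f x := integral_const_mul c _
    _ ≤ c * ∫ x in Ioi 0, f x :=
        mul_le_mul_of_nonneg_left (setIntegral_mono_set hfi (Eventually.of_forall hf0)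
          Ioc_subset_Ioi_self.eventuallyLE) hc
    _ ≤ c * (L2wNorm γ f / √γ) := by
        gcongr
        exact integral_Ioi_le_L2wNorm_div_sqrt hγ hf hf0 hfγ
    _ = c / √γ * L2wNorm γ f := by ring

end WeightedL2

theorem intervalIntegral_le_mul_of_forall_le {F : ℝ → ℝ} {C t T : ℝ} (hC : 0 ≤ C)
    (ht : t ∈ Icc 0 T) (hF : ∀ s ∈ Icc 0 t, F s ≤ C) :
    ∫ s in 0..t, F s ≤ C * T := by
  by_cases hFi : IntervalIntegrable F volume 0 t
  · calc ∫ s in 0..t, F s ≤ ∫ _ in 0..t, C :=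
          intervalIntegral.integral_mono_on ht.1 hFi intervalIntegrable_const hF
      _ = C * t := by rw [intervalIntegral.integral_const, sub_zero, smul_eq_mul, mul_comm]
      _ ≤ C * T := mul_le_mul_of_nonneg_left ht.2 hC
  · rw [intervalIntegral.integral_undef hFi]
    exact mul_nonneg hC (ht.1.trans ht.2)

theorem Kop_le {r₀ J' : ℝ → ℝ} {b lam h : ℝ → ℝ → ℝ} {T R B lamHi M t x : ℝ}
    (hr₀ : ∀ y ≥ 0, 0 ≤ r₀ y ∧ r₀ y ≤ R)
    (hb : ∀ t ∈ Icc 0 T, ∀ x ≥ 0, 0 ≤ b t x ∧ b t x ≤ B)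
    (hlam : ∀ t ∈ Icc 0 T, ∀ x ≥ 0, 0 ≤ lam t x ∧ lam t x ≤ lamHi)
    (hJ' : MonotoneOn J' (Ici 0))
    (hinner : ∀ s ∈ Icc 0 T, ∀ L ≥ 0, ∫ v in 0..L, lam s v * h s v ∈ Icc 0 M)
    (ht : t ∈ Icc 0 T) (hx : 0 ≤ x) :
    Kop r₀ b lam J' h t x ≤ R * B * exp (|J' M| * lamHi * T) := by
  obtain ⟨hr₀0, hr₀R⟩ := hr₀ (t + x) (add_nonneg ht.1 hx)
  obtain ⟨hb0, hbB⟩ := hb t ht x hx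
  have hexponent : ∫ s in 0..t, J' (∫ v in 0..(t - s + x), lam s v * h s v) * lam s (t - s + x)
      ≤ |J' M| * lamHi * T := by
    refine intervalIntegral_le_mul_of_forall_le
      (mul_nonneg (abs_nonneg _) ((hlam t ht x hx).1.trans (hlam t ht x hx).2)) ht
      fun s hs => ?_
    have hsT : s ∈ Icc 0 T := ⟨hs.1, hs.2.trans ht.2⟩
    have hy : 0 ≤ t - s + x := by linarith [hs.2]
    obtain ⟨hI0, hIM⟩ := hinner s hsT _ hy
    obtain ⟨hlam0, hlamle⟩ := hlam s hsT _ hy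
    calc J' (∫ v in 0..(t - s + x), lam s v * h s v) * lam s (t - s + x)
        ≤ |J' M| * lam s (t - s + x) :=
          mul_le_mul_of_nonneg_right
            ((hJ' hI0 (hI0.trans hIM) hIM).trans (le_abs_self _)) hlam0
      _ ≤ |J' M| * lamHi := mul_le_mul_of_nonneg_left hlamle (abs_nonneg _)
  have hR : 0 ≤ R := hr₀0.trans hr₀R
  exact mul_le_mul (mul_le_mul hr₀R hbB hb0 hR) (exp_le_exp.2 hexponent) (exp_pos _).le
    (mul_nonneg hR (hb0.trans hbB))

theorem Kop_fixed_point_bounded_general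
    (T γ lamLo lamHi bBar : ℝ) (hγ : 0 < γ)
    (hlamLo : 0 < lamLo) (hlamHi : 0 < lamHi)
    (lam : ℝ → ℝ → ℝ)
    (hlam : ∀ t ∈ Set.Icc (0:ℝ) T, ∀ x ≥ (0:ℝ),
      lamLo ≤ lam t x ∧ lam t x ≤ lamHi)
    (b : ℝ → ℝ → ℝ)
    (hb : ∀ t ∈ Set.Icc (0:ℝ) T, ∀ x ≥ (0:ℝ), 0 ≤ b t x ∧ b t x ≤ bBar)
    (r₀ : ℝ → ℝ) (hr₀pos : ∀ x ≥ (0:ℝ), 0 ≤ r₀ x)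
    (hr₀bdd : BddAbove (r₀ '' Set.Ici 0))
    (J' : ℝ → ℝ) (hJmono : MonotoneOn J' (Set.Ici 0))
    (r : ℝ → ℝ → ℝ) (hr : MemLL2 T γ r)
    (hfix : ∀ t ∈ Set.Icc (0:ℝ) T, ∀ x ≥ (0:ℝ),
      r t x = Kop r₀ b lam J' r t x) :
    ∀ t ∈ Set.Icc (0:ℝ) T, ∀ x ≥ (0:ℝ),
      r t x ≤ sSup (r₀ '' Set.Ici 0) * bBar *
        Real.exp (|J' (lamHi / Real.sqrt γ * LL2Norm T γ r)| * lamHi * T) := by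
  obtain ⟨hr0, hrMeas, hrInt, hrBdd⟩ := hr
  have hlam' : ∀ t ∈ Icc 0 T, ∀ x ≥ 0, 0 ≤ lam t x ∧ lam t x ≤ lamHi := fun t ht x hx =>
    ⟨hlamLo.le.trans (hlam t ht x hx).1, (hlam t ht x hx).2⟩
  have hinner : ∀ s ∈ Icc 0 T, ∀ L ≥ 0,
      ∫ v in 0..L, lam s v * r s v ∈ Icc 0 (lamHi / √γ * LL2Norm T γ r) := by
    intro s hs L hL
    refine ⟨intervalIntegral.integral_nonneg hL fun v hv =>
      mul_nonneg (hlam' s hs v hv.1).1 (hr0 s v), ?_⟩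
    calc ∫ v in 0..L, lam s v * r s v ≤ lamHi / √γ * L2wNorm γ (r s) :=
          intervalIntegral_mul_le_div_sqrt_mul_L2wNorm hγ hL (hlam' s hs)
            (hrMeas.comp measurable_prodMk_left) (hr0 s) (hrInt s hs)
      _ ≤ lamHi / √γ * LL2Norm T γ r := by
          gcongr
          exact le_csSup hrBdd ⟨s, hs, rfl⟩
  intro t ht x hx
  rw [hfix t ht x hx]
  exact Kop_le (fun y hy => ⟨hr₀pos y hy, le_csSup hr₀bdd ⟨y, hy, rfl⟩⟩) hb hlam' hJmono
    hinner ht hx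

/-- If `r₀` is bounded and `r ∈ 𝕃^{2,γ}_+` satisfies `r = 𝒦r`, then
`r` is bounded:
`r(t,x) ≤ (sup r₀) · b̄ · exp(|J′((λ̄/√γ) ‖r‖_{𝕃^{2,γ}})| λ̄ T*)` on `[0,T*] × [0,∞)`. -/
theorem Kop_fixed_point_bounded
    (T γ lamLo lamHi bBar : ℝ) (hT : 0 < T) (hγ : 0 < γ)
    (hlamLo : 0 < lamLo) (hlamHi : 0 < lamHi) (hbBar : 0 < bBar)
    (lam : ℝ → ℝ → ℝ) (hlamMeas : Measurable (Function.uncurry lam))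
    (hlam : ∀ t ∈ Set.Icc (0:ℝ) T, ∀ x ≥ (0:ℝ),
      lamLo ≤ lam t x ∧ lam t x ≤ lamHi)
    (b : ℝ → ℝ → ℝ) (hbMeas : Measurable (Function.uncurry b))
    (hb : ∀ t ∈ Set.Icc (0:ℝ) T, ∀ x ≥ (0:ℝ), 0 ≤ b t x ∧ b t x ≤ bBar)
    (r₀ : ℝ → ℝ) (hr₀Meas : Measurable r₀) (hr₀pos : ∀ x ≥ (0:ℝ), 0 ≤ r₀ x)
    (hr₀bdd : BddAbove (r₀ '' Set.Ici 0))
    (J' : ℝ → ℝ) (hJmono : MonotoneOn J' (Set.Ici 0))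
    (r : ℝ → ℝ → ℝ) (hr : MemLL2 T γ r)
    (hfix : ∀ t ∈ Set.Icc (0:ℝ) T, ∀ x ≥ (0:ℝ),
      r t x = Kop r₀ b lam J' r t x) :
    ∀ t ∈ Set.Icc (0:ℝ) T, ∀ x ≥ (0:ℝ),
      r t x ≤ sSup (r₀ '' Set.Ici 0) * bBar *
        Real.exp (|J' (lamHi / Real.sqrt γ * LL2Norm T γ r)| * lamHi * T) :=
  Kop_fixed_point_bounded_general T γ lamLo lamHi bBar hγ hlamLo hlamHi lam hlam b hb r₀ hr₀pos
    hr₀bdd J' hJmono r hr hfix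
end

section
/- Let λ̄ > 0, a ∈ ℝ, q ≥ 0, and let ν be a Borel measure on ℝ whose support is contained in (−1/λ̄, ∞) and which satisfies ∫_{(−1/λ̄,1)} y² ν(dy) < ∞ and ∫_{[1,∞)} y ν(dy) < ∞. Define J′(z) := −a + q z + ∫_{(−1/λ̄,1)} y (1 − e^{−zy}) ν(dy) − ∫_{[1,∞)} y e^{−zy} ν(dy) for z > 0. If q > 0 or ν((−1/λ̄, 0)) > 0, then there exist constants a′ > 0 and b′ ∈ ℝ such that J′(z) ≥ a′ (ln z)³ + b′ for all z > 0. -/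
/-!
Both hypotheses make `J′` grow at least linearly. A Gaussian part contributes `q z`. If
`ν((−1/λ̄, 0)) > 0`, continuity from below gives `δ > 0` with `ν((−1/λ̄, −δ)) > 0`, finite
because `y²` is integrable there, and since `y (1 − e^{−zy}) ≥ z y²` for `y ≤ 0` these jumps
contribute at least `δ² ν((−1/λ̄, −δ)) z`. The small-jump integrand is nonnegative and the
big-jump integral is at most `∫_{[1,∞)} y ν(dy)`. Finally `(ln z)³ ≤ 27 z`.
-/

open MeasureTheory Set Filter

namespace Real

lemma log_pow_three_le_mul {z : ℝ} (hz : 0 < z) : log z ^ 3 ≤ 27 * z := by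
  rcases le_total z 1 with h | h
  · have : log z ^ 3 ≤ 0 := Odd.pow_nonpos (by decide) (log_nonpos hz.le h)
    linarith
  · have hlog : log z ≤ z ^ (3⁻¹ : ℝ) / 3⁻¹ := log_le_rpow_div hz.le (by norm_num)
    calc log z ^ 3 ≤ (z ^ (3⁻¹ : ℝ) / 3⁻¹) ^ 3 := pow_le_pow_left₀ (log_nonneg h) hlog 3
      _ = 27 * z := by
        rw [div_pow, ← rpow_natCast (z ^ _), ← rpow_mul hz.le]
        norm_num
        ring

lemma abs_exp_sub_one_le_mul_exp_abs (t : ℝ) : |exp t - 1| ≤ |t| * exp |t| := by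
  simpa [← Complex.ofReal_exp, ← Complex.ofReal_one, ← Complex.ofReal_sub] using
    Complex.norm_exp_sub_sum_le_norm_mul_exp t 1

lemma mul_one_sub_exp_neg_mul_nonneg {z : ℝ} (hz : 0 ≤ z) (y : ℝ) :
    0 ≤ y * (1 - exp (-z * y)) := by
  rcases le_total 0 y with hy | hy
  · exact mul_nonneg hy (sub_nonneg.2 (exp_le_one_iff.2 (by nlinarith)))
  · exact mul_nonneg_of_nonpos_of_nonpos hy (sub_nonpos.2 (one_le_exp (by nlinarith)))

lemma mul_sq_le_mul_one_sub_exp_neg_mul (z : ℝ) {y : ℝ} (hy : y ≤ 0) :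
    z * y ^ 2 ≤ y * (1 - exp (-z * y)) := by
  have := add_one_le_exp (-z * y)
  nlinarith

end Real

open Real

section LevyMeasure

variable {ν : Measure ℝ} {s : Set ℝ}

lemma integrableOn_mul_one_sub_exp_neg_mul (hs : MeasurableSet s) (hsb : Bornology.IsBounded s)
    (hsq : IntegrableOn (fun y => y ^ 2) s ν) (z : ℝ) :
    IntegrableOn (fun y => y * (1 - exp (-z * y))) s ν := by
  obtain ⟨M, hM⟩ := hsb.exists_norm_le
  refine (hsq.const_mul (|z| * exp (|z| * M))).mono'
    (Continuous.aestronglyMeasurable (by fun_prop)) ?_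
  filter_upwards [ae_restrict_mem hs] with y hy
  have hyM : |y| ≤ M := hM y hy
  calc ‖y * (1 - exp (-z * y))‖ = |y| * |exp (-z * y) - 1| := by
        rw [Real.norm_eq_abs, abs_mul, abs_sub_comm]
    _ ≤ |y| * (|z| * |y| * exp (|z| * M)) := by
        gcongr
        calc |exp (-z * y) - 1| ≤ |-z * y| * exp |-z * y| := abs_exp_sub_one_le_mul_exp_abs _
          _ ≤ |z| * |y| * exp (|z| * M) := by
            rw [abs_mul, abs_neg]
            gcongr
    _ = |z| * exp (|z| * M) * y ^ 2 := by rw [← sq_abs y]; ring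

lemma setIntegral_mul_exp_neg_mul_le (hs : MeasurableSet s) (hs0 : s ⊆ Ici 0)
    (hint : IntegrableOn (fun y => y) s ν) {z : ℝ} (hz : 0 ≤ z) :
    ∫ y in s, y * exp (-z * y) ∂ν ≤ ∫ y in s, y ∂ν := by
  have hle : ∀ y ∈ s, y * exp (-z * y) ≤ y := fun y hy =>
    mul_le_of_le_one_right (hs0 hy) (exp_le_one_iff.2 (by nlinarith [mem_Ici.1 (hs0 hy)]))
  have hint' : IntegrableOn (fun y => y * exp (-z * y)) s ν := by
    refine hint.mono' (Continuous.aestronglyMeasurable (by fun_prop)) ?_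
    filter_upwards [ae_restrict_mem hs] with y hy
    rw [Real.norm_eq_abs, abs_of_nonneg (mul_nonneg (hs0 hy) (exp_pos _).le)]
    exact hle y hy
  exact setIntegral_mono_on hint' hint hs hle

lemma exists_pos_measure_inter_Iio_neg (h : 0 < ν (s ∩ Iio 0)) :
    ∃ δ > 0, 0 < ν (s ∩ Iio (-δ)) := by
  by_contra! hnull
  have hcover : s ∩ Iio 0 ⊆ ⋃ n : ℕ, s ∩ Iio (-(1 / ((n : ℝ) + 1))) := by
    rintro y ⟨hys, hy⟩
    obtain ⟨n, hn⟩ := exists_nat_one_div_lt (neg_pos.2 hy : 0 < -y)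
    exact mem_iUnion.2 ⟨n, hys, by simp only [mem_Iio]; linarith⟩
  refine h.ne' (measure_mono_null hcover (measure_iUnion_null fun n => ?_))
  exact nonpos_iff_eq_zero.1 (hnull _ Nat.one_div_pos_of_nat)

lemma measure_inter_Iio_neg_lt_top (hsq : IntegrableOn (fun y => y ^ 2) s ν) {δ : ℝ}
    (hδ : 0 < δ) : ν (s ∩ Iio (-δ)) < ⊤ := by
  rw [inter_comm]
  refine ((Measure.le_restrict_apply s _).trans (measure_mono fun y (hy : y < -δ) => ?_)).trans_lt
    (hsq.measure_norm_ge_lt_top (pow_pos hδ 2))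
  show δ ^ 2 ≤ ‖y ^ 2‖
  rw [Real.norm_eq_abs, abs_of_nonneg (sq_nonneg y)]
  nlinarith

lemma exists_pos_mul_le_setIntegral_mul_one_sub_exp_neg_mul (hs : MeasurableSet s)
    (hsb : Bornology.IsBounded s) (hsq : IntegrableOn (fun y => y ^ 2) s ν)
    (hneg : 0 < ν (s ∩ Iio 0)) :
    ∃ c > 0, ∀ z ≥ 0, c * z ≤ ∫ y in s, y * (1 - exp (-z * y)) ∂ν := by
  obtain ⟨δ, hδ, hpos⟩ := exists_pos_measure_inter_Iio_neg hneg
  have hfin := measure_inter_Iio_neg_lt_top hsq hδ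
  refine ⟨δ ^ 2 * ν.real (s ∩ Iio (-δ)),
    mul_pos (pow_pos hδ 2) (ENNReal.toReal_pos hpos.ne' hfin.ne), fun z hz => ?_⟩
  have hint := integrableOn_mul_one_sub_exp_neg_mul hs hsb hsq z
  calc δ ^ 2 * ν.real (s ∩ Iio (-δ)) * z = z * δ ^ 2 * ν.real (s ∩ Iio (-δ)) := by ring
    _ ≤ ∫ y in s ∩ Iio (-δ), y * (1 - exp (-z * y)) ∂ν := by
      refine setIntegral_ge_of_const_le_real (hs.inter measurableSet_Iio) hfin.ne
        (fun y hy => ?_) (hint.mono_set inter_subset_left)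
      have hy : y < -δ := hy.2
      calc z * δ ^ 2 ≤ z * y ^ 2 := mul_le_mul_of_nonneg_left (by nlinarith) hz
        _ ≤ _ := mul_sq_le_mul_one_sub_exp_neg_mul z (by linarith)
    _ ≤ ∫ y in s, y * (1 - exp (-z * y)) ∂ν :=
      setIntegral_mono_set hint (Eventually.of_forall (mul_one_sub_exp_neg_mul_nonneg hz))
        inter_subset_left.eventuallyLE

end LevyMeasure

lemma exists_mul_log_pow_three_add_le_of_mul_add_le {f : ℝ → ℝ} {c b : ℝ} (hc : 0 < c)
    (h : ∀ z > 0, c * z + b ≤ f z) :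
    ∃ a' > (0 : ℝ), ∃ b' : ℝ, ∀ z > (0 : ℝ), a' * log z ^ 3 + b' ≤ f z := by
  refine ⟨c / 27, by positivity, b, fun z hz => ?_⟩
  have := mul_le_mul_of_nonneg_left (log_pow_three_le_mul hz) (by positivity : 0 ≤ c / 27)
  linarith [h z hz]

theorem Jprime_cubic_log_growth_of_wiener_or_negative_jumps_general
    (lamBar a q : ℝ) (hq : 0 ≤ q)
    (ν : MeasureTheory.Measure ℝ)
    (hint1 : MeasureTheory.IntegrableOn (fun y => y ^ 2)
      (Set.Ioo (-(1 / lamBar)) 1) ν)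
    (hint2 : MeasureTheory.IntegrableOn (fun y => y) (Set.Ici 1) ν)
    (J' : ℝ → ℝ)
    (hJ : ∀ z > (0:ℝ), J' z = -a + q * z
      + (∫ y in Set.Ioo (-(1 / lamBar)) 1, y * (1 - Real.exp (-z * y)) ∂ν)
      - ∫ y in Set.Ici 1, y * Real.exp (-z * y) ∂ν)
    (hcase : 0 < q ∨ 0 < ν (Set.Ioo (-(1 / lamBar)) 0)) :
    ∃ a' > (0:ℝ), ∃ b' : ℝ, ∀ z > (0:ℝ),
      a' * (Real.log z) ^ 3 + b' ≤ J' z := by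
  obtain ⟨c, hc, hlinear⟩ : ∃ c > 0, ∀ z > 0,
      c * z ≤ q * z + ∫ y in Ioo (-(1 / lamBar)) 1, y * (1 - exp (-z * y)) ∂ν := by
    rcases hcase with hq_pos | hneg
    · refine ⟨q, hq_pos, fun z hz => le_add_of_nonneg_right ?_⟩
      exact setIntegral_nonneg measurableSet_Ioo fun y _ =>
        mul_one_sub_exp_neg_mul_nonneg hz.le y
    · have hinter : Ioo (-(1 / lamBar)) 1 ∩ Iio 0 = Ioo (-(1 / lamBar)) 0 := by
        rw [Ioo_inter_Iio, min_eq_right zero_le_one]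
      rw [← hinter] at hneg
      obtain ⟨c, hc, h⟩ := exists_pos_mul_le_setIntegral_mul_one_sub_exp_neg_mul
        measurableSet_Ioo (Metric.isBounded_Ioo _ _) hint1 hneg
      exact ⟨c, hc, fun z hz => (h z hz.le).trans (le_add_of_nonneg_left (by positivity))⟩
  refine exists_mul_log_pow_three_add_le_of_mul_add_le hc
    (b := -a - ∫ y in Ici 1, y ∂ν) fun z hz => ?_
  rw [hJ z hz]
  linarith [hlinear z hz,
    setIntegral_mul_exp_neg_mul_le measurableSet_Ici (fun y (hy : 1 ≤ y) => zero_le_one.trans hy)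
      hint2 hz.le]

/-- If the Lévy exponent of the noise has a Gaussian part (`q > 0`) or
the Lévy measure charges `(−1/λ̄, 0)`, then `J′(z) ≥ a′ (ln z)³ + b′` for all `z > 0`,
for some `a′ > 0` and `b′ ∈ ℝ`. -/
theorem Jprime_cubic_log_growth_of_wiener_or_negative_jumps
    (lamBar a q : ℝ) (hlamBar : 0 < lamBar) (hq : 0 ≤ q)
    (ν : MeasureTheory.Measure ℝ)
    (hsupp : ν (Set.Iic (-(1 / lamBar))) = 0)
    (hint1 : MeasureTheory.IntegrableOn (fun y => y ^ 2)
      (Set.Ioo (-(1 / lamBar)) 1) ν)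
    (hint2 : MeasureTheory.IntegrableOn (fun y => y) (Set.Ici 1) ν)
    (J' : ℝ → ℝ)
    (hJ : ∀ z > (0:ℝ), J' z = -a + q * z
      + (∫ y in Set.Ioo (-(1 / lamBar)) 1, y * (1 - Real.exp (-z * y)) ∂ν)
      - ∫ y in Set.Ici 1, y * Real.exp (-z * y) ∂ν)
    (hcase : 0 < q ∨ 0 < ν (Set.Ioo (-(1 / lamBar)) 0)) :
    ∃ a' > (0:ℝ), ∃ b' : ℝ, ∀ z > (0:ℝ),
      a' * (Real.log z) ^ 3 + b' ≤ J' z :=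
  Jprime_cubic_log_growth_of_wiener_or_negative_jumps_general lamBar a q hq ν hint1 hint2 J' hJ
    hcase
end

section
/- Let a ∈ ℝ and let ν be a Borel measure on (0,∞) with ∫_{(0,1)} y² ν(dy) < ∞ and ∫_{[1,∞)} y ν(dy) < ∞. Define U(x) := ∫_{(0,x]} y² ν(dy) for x > 0 and J′(z) := −a + ∫_{(0,1)} y (1 − e^{−zy}) ν(dy) − ∫_{[1,∞)} y e^{−zy} ν(dy) for z > 0. Suppose there exist ρ > 1 and a function M, positive on some interval (0,δ) and slowly varying at 0, such that U(x) / (x^ρ M(x)) → 1 as x → 0⁺. Then for every C > 0, limsup_{z→∞} ( ln z − C J′(z) ) = +∞. -/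
/-!
Since `U(x) ≍ x^ρ M(x)` with `ρ > 1` and `M` slowly varying, `g(t) := t^ρ M(t)` satisfies
`g(t/2) ≤ q g(t)` near `0` for some `q < 1/2`. Hence `U(ε 2⁻ⁿ) = O(qⁿ)`, and on the dyadic shell
`(ε 2⁻ⁿ⁻¹, ε 2⁻ⁿ]` the first moment of `ν` is at most `2ⁿ⁺¹/ε` times the second, i.e. `O((2q)ⁿ)`.
Summing the shells, `∫_{(0,1)} y ν(dy) < ∞`, so `J′` is bounded above by
`-a + ∫_{(0,1)} y ν(dy)` and `ln z − C J′(z) → ∞`.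
-/

open MeasureTheory Set Filter Topology

lemma Ioc_zero_subset_iUnion_Ioc_div_two_pow (ε : ℝ) :
    Ioc 0 ε ⊆ ⋃ n : ℕ, Ioc (ε / 2 ^ (n + 1)) (ε / 2 ^ n) := by
  rintro y ⟨hy, hyε⟩
  obtain ⟨n, hn, hn'⟩ := exists_nat_pow_near ((one_le_div hy).2 hyε) (one_lt_two (α := ℝ))
  refine mem_iUnion.2 ⟨n, ?_, ?_⟩
  · rwa [div_lt_iff₀ (by positivity), mul_comm, ← div_lt_iff₀ hy]
  · rwa [le_div_iff₀ (by positivity), mul_comm, ← le_div_iff₀ hy]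

lemma setLIntegral_Ioc_ofReal_le_inv_mul {ν : Measure ℝ} {a b : ℝ} (ha : 0 < a) :
    ∫⁻ y in Ioc a b, ENNReal.ofReal y ∂ν
      ≤ ENNReal.ofReal a⁻¹ * ∫⁻ y in Ioc 0 b, ENNReal.ofReal (y ^ 2) ∂ν :=
  calc ∫⁻ y in Ioc a b, ENNReal.ofReal y ∂ν
      ≤ ∫⁻ y in Ioc a b, ENNReal.ofReal a⁻¹ * ENNReal.ofReal (y ^ 2) ∂ν := by
        refine setLIntegral_mono (by fun_prop) fun y hy => ?_
        rw [← ENNReal.ofReal_mul (by positivity)]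
        refine ENNReal.ofReal_le_ofReal ?_
        rw [inv_mul_eq_div, le_div_iff₀ ha]
        nlinarith [hy.1]
    _ = ENNReal.ofReal a⁻¹ * ∫⁻ y in Ioc a b, ENNReal.ofReal (y ^ 2) ∂ν :=
        lintegral_const_mul _ (by fun_prop)
    _ ≤ ENNReal.ofReal a⁻¹ * ∫⁻ y in Ioc 0 b, ENNReal.ofReal (y ^ 2) ∂ν := by
        gcongr

lemma div_two_pow_mem_Ioc {ε : ℝ} (hε : 0 < ε) (n : ℕ) : ε / 2 ^ n ∈ Ioc 0 ε :=
  ⟨by positivity, div_le_self hε.le (one_le_pow₀ one_le_two)⟩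

lemma le_pow_mul_of_forall_half_le {g : ℝ → ℝ} {ε q : ℝ} (hε : 0 < ε) (hq : 0 ≤ q)
    (h : ∀ t ∈ Ioc 0 ε, g (t / 2) ≤ q * g t) (n : ℕ) :
    g (ε / 2 ^ n) ≤ q ^ n * g ε := by
  induction n with
  | zero => simp
  | succ n ih =>
    calc g (ε / 2 ^ (n + 1)) = g (ε / 2 ^ n / 2) := by rw [pow_succ, div_div]
      _ ≤ q * g (ε / 2 ^ n) := h _ (div_two_pow_mem_Ioc hε n)
      _ ≤ q ^ (n + 1) * g ε := by rw [pow_succ', mul_assoc]; exact mul_le_mul_of_nonneg_left ih hq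

theorem integrableOn_Ioc_zero_of_sq_moment_le_geometric {ν : Measure ℝ} {ε c q : ℝ}
    (hε : 0 < ε) (hq : 0 ≤ q) (hq2 : q < 1 / 2)
    (h : ∀ n : ℕ, ∫⁻ y in Ioc 0 (ε / 2 ^ n), ENNReal.ofReal (y ^ 2) ∂ν
      ≤ ENNReal.ofReal (c * q ^ n)) :
    IntegrableOn (fun y => y) (Ioc 0 ε) ν := by
  have hshell : ∀ n : ℕ, ∫⁻ y in Ioc (ε / 2 ^ (n + 1)) (ε / 2 ^ n), ENNReal.ofReal y ∂ν
      ≤ ENNReal.ofReal (2 * c / ε) * ENNReal.ofReal (2 * q) ^ n := fun n =>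
    calc _ ≤ ENNReal.ofReal (ε / 2 ^ (n + 1))⁻¹ * ENNReal.ofReal (c * q ^ n) :=
          (setLIntegral_Ioc_ofReal_le_inv_mul (by positivity)).trans (by gcongr; exact h n)
      _ = ENNReal.ofReal (2 * c / ε) * ENNReal.ofReal (2 * q) ^ n := by
          rw [← ENNReal.ofReal_mul (by positivity), ← ENNReal.ofReal_pow (by positivity),
            ← ENNReal.ofReal_mul' (by positivity)]
          congr 1
          field_simp
          ring
  refine ⟨measurable_id.aestronglyMeasurable, (hasFiniteIntegral_iff_ofReal ?_).2 ?_⟩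
  · exact (ae_restrict_iff' measurableSet_Ioc).2 (ae_of_all _ fun y hy => hy.1.le)
  calc ∫⁻ y in Ioc 0 ε, ENNReal.ofReal y ∂ν
      ≤ ∫⁻ y in ⋃ n : ℕ, Ioc (ε / 2 ^ (n + 1)) (ε / 2 ^ n), ENNReal.ofReal y ∂ν :=
        lintegral_mono_set (Ioc_zero_subset_iUnion_Ioc_div_two_pow ε)
    _ ≤ ∑' n : ℕ, ENNReal.ofReal (2 * c / ε) * ENNReal.ofReal (2 * q) ^ n :=
        (lintegral_iUnion_le _ _).trans (ENNReal.tsum_le_tsum hshell)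
    _ < ⊤ := by
        rw [ENNReal.tsum_mul_left, ENNReal.tsum_geometric]
        refine ENNReal.mul_lt_top ENNReal.ofReal_lt_top (ENNReal.inv_lt_top.2 (tsub_pos_of_lt ?_))
        exact ENNReal.ofReal_lt_one.2 (by linarith)

theorem integrableOn_Ioc_zero_of_sq_moment_le {ν : Measure ℝ} {g : ℝ → ℝ} {ε q : ℝ}
    (hε : 0 < ε) (hq : 0 ≤ q) (hq2 : q < 1 / 2) (hhalf : ∀ t ∈ Ioc 0 ε, g (t / 2) ≤ q * g t)
    (hmoment : ∀ t ∈ Ioc 0 ε, ∫⁻ y in Ioc 0 t, ENNReal.ofReal (y ^ 2) ∂ν ≤ ENNReal.ofReal (g t)) :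
    IntegrableOn (fun y => y) (Ioc 0 ε) ν := by
  refine integrableOn_Ioc_zero_of_sq_moment_le_geometric (c := g ε) hε hq hq2 fun n => ?_
  refine (hmoment _ (div_two_pow_mem_Ioc hε n)).trans (ENNReal.ofReal_le_ofReal ?_)
  linarith [le_pow_mul_of_forall_half_le hε hq hhalf n]

theorem integrableOn_Ioo_zero_one_of_integrableOn_Ioc {ν : Measure ℝ} {ε : ℝ} (hε : 0 < ε)
    (hsmall : IntegrableOn (fun y => y) (Ioc 0 ε) ν)
    (hsq : IntegrableOn (fun y => y ^ 2) (Ioo 0 1) ν) :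
    IntegrableOn (fun y => y) (Ioo 0 1) ν := by
  have hlarge : IntegrableOn (fun y => y) (Ioo ε 1) ν := by
    refine Integrable.mono' ((hsq.mono_set (Ioo_subset_Ioo_left hε.le)).div_const ε)
      measurable_id.aestronglyMeasurable ((ae_restrict_iff' measurableSet_Ioo).2 ?_)
    refine ae_of_all _ fun y hy => ?_
    rw [Real.norm_eq_abs, abs_of_pos (hε.trans hy.1), le_div_iff₀ hε]
    nlinarith [hy.1]
  refine (hsmall.union hlarge).mono_set fun y hy => ?_
  rcases le_or_gt y ε with h | h
  exacts [Or.inl ⟨hy.1, h⟩, Or.inr ⟨h, hy.2⟩]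

lemma eventually_rpow_mul_half_le {M : ℝ → ℝ} {ρ q : ℝ} (hq : 1 < 2 ^ ρ * q)
    (hM : ∀ᶠ t in 𝓝[>] 0, 0 < M t)
    (hslow : Tendsto (fun t => M (t * (1 / 2)) / M t) (𝓝[>] 0) (𝓝 1)) :
    ∀ᶠ t in 𝓝[>] 0, (t / 2) ^ ρ * M (t / 2) ≤ q * (t ^ ρ * M t) := by
  filter_upwards [hslow.eventually_lt_const hq, hM, self_mem_nhdsWithin] with t hratio hMt ht
  rw [mul_one_div, div_lt_iff₀ hMt] at hratio
  have h2ρ : (0 : ℝ) < 2 ^ ρ := by positivity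
  have htρ : 0 < t ^ ρ := Real.rpow_pos_of_pos ht ρ
  rw [Real.div_rpow (le_of_lt ht) zero_le_two, div_mul_eq_mul_div, div_le_iff₀ h2ρ]
  nlinarith [mul_lt_mul_of_pos_left hratio htρ]

lemma setIntegral_mul_one_sub_exp_le {ν : Measure ℝ} {s : Set ℝ} (hs : MeasurableSet s)
    (hpos : s ⊆ Ici 0) (hint : IntegrableOn (fun y => y) s ν) {z : ℝ} (hz : 0 ≤ z) :
    ∫ y in s, y * (1 - Real.exp (-z * y)) ∂ν ≤ ∫ y in s, y ∂ν := by
  have hbounds : ∀ y ∈ s, 0 ≤ y * (1 - Real.exp (-z * y)) ∧ y * (1 - Real.exp (-z * y)) ≤ y := by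
    intro y hy
    have hy : 0 ≤ y := hpos hy
    have hexp : Real.exp (-z * y) ≤ 1 := Real.exp_le_one_iff.2 (by nlinarith)
    have := Real.exp_pos (-z * y)
    constructor <;> nlinarith
  refine integral_mono_of_nonneg ?_ hint ?_ <;> refine (ae_restrict_iff' hs).2 (ae_of_all _ ?_)
  exacts [fun y hy => (hbounds y hy).1, fun y hy => (hbounds y hy).2]

theorem tendsto_log_sub_mul_atTop {f : ℝ → ℝ} {B C : ℝ} (hf : ∀ z > 0, f z ≤ B) (hC : 0 ≤ C) :
    Tendsto (fun z => Real.log z - C * f z) atTop atTop := by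
  refine tendsto_atTop_mono' _ ?_
    (tendsto_atTop_add_const_right _ (-(C * B)) Real.tendsto_log_atTop)
  filter_upwards [eventually_gt_atTop 0] with z hz
  nlinarith [hf z hz]

theorem integrableOn_Ioo_zero_one_of_tendsto_div_rpow_mul {ν : Measure ℝ}
    (hsq : IntegrableOn (fun y => y ^ 2) (Ioo 0 1) ν)
    {U : ℝ → ℝ} (hU : ∀ x > (0 : ℝ), U x = ∫ y in Ioc 0 x, y ^ 2 ∂ν) {ρ : ℝ} (hρ : 1 < ρ)
    {M : ℝ → ℝ} (hM : ∀ᶠ t in 𝓝[>] 0, 0 < M t)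
    (hslow : Tendsto (fun t => M (t * (1 / 2)) / M t) (𝓝[>] 0) (𝓝 1))
    (hUasymp : Tendsto (fun x => U x / (x ^ ρ * M x)) (𝓝[>] 0) (𝓝 1)) :
    IntegrableOn (fun y => y) (Ioo 0 1) ν := by
  obtain ⟨q, hq, hq2⟩ : ∃ q : ℝ, 1 / 2 ^ ρ < q ∧ q < 1 / 2 := by
    refine exists_between (one_div_lt_one_div_of_lt two_pos ?_)
    simpa using Real.rpow_lt_rpow_of_exponent_lt one_lt_two hρ
  have hq0 : 0 < q := lt_trans (by positivity) hq
  have hhalf := eventually_rpow_mul_half_le (by rwa [div_lt_iff₀' (by positivity)] at hq) hM hslow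
  have hUg : ∀ᶠ t in 𝓝[>] 0, U t ≤ 2 * (t ^ ρ * M t) := by
    filter_upwards [hUasymp.eventually_lt_const one_lt_two, hM, self_mem_nhdsWithin]
      with t hUt hMt (ht : 0 < t)
    exact ((div_lt_iff₀ (by positivity)).1 hUt).le
  have hlt_one : ∀ᶠ t in 𝓝[>] (0 : ℝ), t < 1 :=
    eventually_nhdsWithin_of_eventually_nhds (eventually_lt_nhds one_pos)
  obtain ⟨ε, hε, hsmall⟩ := mem_nhdsGT_iff_exists_Ioc_subset.1 (hhalf.and (hUg.and hlt_one))
  have hmoment : ∀ t ∈ Ioc 0 ε, ∫⁻ y in Ioc 0 t, ENNReal.ofReal (y ^ 2) ∂ν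
      ≤ ENNReal.ofReal (2 * (t ^ ρ * M t)) := by
    intro t ht
    have hsub : Ioc 0 t ⊆ Ioo 0 1 := fun y hy => ⟨hy.1, hy.2.trans_lt (hsmall ht).2.2⟩
    rw [← ofReal_integral_eq_lintegral_ofReal (hsq.mono_set hsub)
      (ae_of_all _ fun y => sq_nonneg y), ← hU t ht.1]
    exact ENNReal.ofReal_le_ofReal (hsmall ht).2.1
  exact integrableOn_Ioo_zero_one_of_integrableOn_Ioc hε (integrableOn_Ioc_zero_of_sq_moment_le hε
    hq0.le hq2 (fun t ht => by linarith [(hsmall ht).1]) hmoment) hsq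

theorem log_growth_of_tauberian_rho_gt_one_general
    (a : ℝ) (ν : MeasureTheory.Measure ℝ)
    (hint1 : MeasureTheory.IntegrableOn (fun y => y ^ 2) (Set.Ioo 0 1) ν)
    (U : ℝ → ℝ) (hU : ∀ x > (0:ℝ), U x = ∫ y in Set.Ioc 0 x, y ^ 2 ∂ν)
    (J' : ℝ → ℝ)
    (hJ : ∀ z > (0:ℝ), J' z = -a
      + (∫ y in Set.Ioo 0 1, y * (1 - Real.exp (-z * y)) ∂ν)
      - ∫ y in Set.Ici 1, y * Real.exp (-z * y) ∂ν)
    (ρ : ℝ) (hρ : 1 < ρ)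
    (M : ℝ → ℝ) (δ : ℝ) (hδ : 0 < δ)
    (hMpos : ∀ x ∈ Set.Ioo (0:ℝ) δ, 0 < M x)
    (hslow : ∀ x > (0:ℝ), Filter.Tendsto (fun t => M (t * x) / M t)
      (nhdsWithin 0 (Set.Ioi 0)) (nhds 1))
    (hUasymp : Filter.Tendsto (fun x => U x / (x ^ ρ * M x))
      (nhdsWithin 0 (Set.Ioi 0)) (nhds 1)) :
    ∀ C > (0:ℝ), ∀ R : ℝ, ∃ᶠ z in Filter.atTop,
      R ≤ Real.log z - C * J' z := by
  have hint : IntegrableOn (fun y => y) (Ioo 0 1) ν :=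
    integrableOn_Ioo_zero_one_of_tendsto_div_rpow_mul hint1 hU hρ
      (eventually_of_mem (Ioo_mem_nhdsGT hδ) hMpos) (hslow (1 / 2) one_half_pos) hUasymp
  have hJle : ∀ z > 0, J' z ≤ -a + ∫ y in Ioo 0 1, y ∂ν := by
    intro z hz
    have h1 := setIntegral_mul_one_sub_exp_le measurableSet_Ioo (fun y hy => hy.1.le) hint hz.le
    have h2 : 0 ≤ ∫ y in Ici 1, y * Real.exp (-z * y) ∂ν := setIntegral_nonneg measurableSet_Ici
      fun y hy => mul_nonneg (zero_le_one.trans hy) (Real.exp_pos _).le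
    rw [hJ z hz]
    linarith
  intro C hC R
  exact (tendsto_atTop.1 (tendsto_log_sub_mul_atTop hJle hC.le) R).frequently

/-- (Tauberian existence criterion, case `ρ > 1`.) If
`U(x) = ∫_{(0,x]} y² ν(dy)` behaves like `x^ρ M(x)` as `x → 0⁺` with `ρ > 1` and `M`
slowly varying at `0`, then the logarithmic growth condition
`limsup_{z→∞}(ln z − C J′(z)) = +∞` holds for every `C > 0`. -/
theorem log_growth_of_tauberian_rho_gt_one
    (a : ℝ) (ν : MeasureTheory.Measure ℝ) (hν : ν (Set.Iic 0) = 0)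
    (hint1 : MeasureTheory.IntegrableOn (fun y => y ^ 2) (Set.Ioo 0 1) ν)
    (hint2 : MeasureTheory.IntegrableOn (fun y => y) (Set.Ici 1) ν)
    (U : ℝ → ℝ) (hU : ∀ x > (0:ℝ), U x = ∫ y in Set.Ioc 0 x, y ^ 2 ∂ν)
    (J' : ℝ → ℝ)
    (hJ : ∀ z > (0:ℝ), J' z = -a
      + (∫ y in Set.Ioo 0 1, y * (1 - Real.exp (-z * y)) ∂ν)
      - ∫ y in Set.Ici 1, y * Real.exp (-z * y) ∂ν)
    (ρ : ℝ) (hρ : 1 < ρ)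
    (M : ℝ → ℝ) (δ : ℝ) (hδ : 0 < δ)
    (hMpos : ∀ x ∈ Set.Ioo (0:ℝ) δ, 0 < M x)
    (hslow : ∀ x > (0:ℝ), Filter.Tendsto (fun t => M (t * x) / M t)
      (nhdsWithin 0 (Set.Ioi 0)) (nhds 1))
    (hUasymp : Filter.Tendsto (fun x => U x / (x ^ ρ * M x))
      (nhdsWithin 0 (Set.Ioi 0)) (nhds 1)) :
    ∀ C > (0:ℝ), ∀ R : ℝ, ∃ᶠ z in Filter.atTop,
      R ≤ Real.log z - C * J' z :=
  log_growth_of_tauberian_rho_gt_one_general a ν hint1 U hU J' hJ ρ hρ M δ hδ hMpos hslow hUasymp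
end

section
/- Let a ∈ ℝ and let ν be a Borel measure on (0,∞), absolutely continuous with respect to Lebesgue measure, with ∫_{(0,1)} y² ν(dy) < ∞ and ∫_{[1,∞)} y ν(dy) < ∞. Define U(x) := ∫_{(0,x]} y² ν(dy) for x > 0 and J′(z) := −a + ∫_{(0,1)} y (1 − e^{−zy}) ν(dy) − ∫_{[1,∞)} y e^{−zy} ν(dy) for z > 0. Suppose there exists a function M, positive on some interval (0,δ) and slowly varying at 0, such that U(x) / (x M(x)) → 1 as x → 0⁺, M(x) → 0 as x → 0⁺, and ∫₀¹ M(x)/x dx = +∞. Then for every C > 0, limsup_{z→∞} ( ln z − C J′(z) ) = +∞. -/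
/-!
Since `U(x) ~ x M(x)` and `M(x) → 0`, we have `U(x) = o(x)`. On the dyadic block
`(x₀ 2⁻ᵏ⁻¹, x₀ 2⁻ᵏ]` one has `y ≤ 2ᵏ⁺¹ y² / x₀`, so `U(x) ≤ ε x` on `(0, x₀]` gives `y ν(dy)`
mass at most `2ε` per block. For `2ⁿ ≤ z x₀ < 2ⁿ⁺¹` the integrand `y (1 - e^{-zy})` is at most
`z y²` below `x₀ 2⁻ⁿ⁻¹` and at most `y` above, so `∫_{(0,1)} y (1 - e^{-zy}) ν(dy)` is at most
`(2ε / ln 2) ln z + O(1)`. The integral over `[1, ∞)` only lowers `J′`, hence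
`J′(z) ≤ -a + o(ln z)` and `ln z - C J′(z) → ∞`.
-/

open MeasureTheory Set Filter Topology Real

lemma tendsto_div_of_tendsto_div_mul {α : Type*} {l : Filter α} {f g h : α → ℝ} {c : ℝ}
    (hfgh : Tendsto (fun x => f x / (g x * h x)) l (𝓝 c)) (hc : c ≠ 0)
    (hh : Tendsto h l (𝓝 0)) : Tendsto (fun x => f x / g x) l (𝓝 0) := by
  have hprod := hfgh.mul hh
  rw [mul_zero] at hprod
  refine hprod.congr' ?_
  filter_upwards [hfgh.eventually_ne hc] with x hx
  obtain ⟨hg, hh⟩ := mul_ne_zero_iff.1 fun h0 => hx (by rw [h0, div_zero])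
  field_simp

lemma exists_forall_Ioc_le_mul_of_tendsto_div {f : ℝ → ℝ}
    (hf : Tendsto (fun x => f x / x) (𝓝[>] 0) (𝓝 0)) {ε b : ℝ} (hε : 0 < ε) (hb : 0 < b) :
    ∃ x₀ ∈ Ioo 0 b, ∀ x ∈ Ioc 0 x₀, f x ≤ ε * x := by
  obtain ⟨u, hu, hsub⟩ := mem_nhdsGT_iff_exists_Ioc_subset.1 (hf.eventually_lt_const hε)
  refine ⟨min u (b / 2), ⟨lt_min hu (half_pos hb), (min_le_right _ _).trans_lt (half_lt_self hb)⟩,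
    fun x hx => ?_⟩
  have hfx : f x / x < ε := hsub ⟨hx.1, hx.2.trans (min_le_left _ _)⟩
  rw [div_lt_iff₀ hx.1] at hfx
  exact hfx.le

section ExpBounds

variable {y z : ℝ}

lemma mul_one_sub_exp_neg_mul_nonneg (hz : 0 ≤ z) (hy : 0 ≤ y) :
    0 ≤ y * (1 - exp (-z * y)) :=
  mul_nonneg hy (sub_nonneg.2 (exp_le_one_iff.2 (by nlinarith)))

lemma mul_one_sub_exp_neg_mul_le_self (hy : 0 ≤ y) : y * (1 - exp (-z * y)) ≤ y :=
  mul_le_of_le_one_right hy (sub_le_self _ (exp_pos _).le)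

lemma mul_one_sub_exp_neg_mul_le_mul_sq (hy : 0 ≤ y) : y * (1 - exp (-z * y)) ≤ z * y ^ 2 := by
  nlinarith [add_one_le_exp (-z * y)]

end ExpBounds

section Measure

variable {ν : Measure ℝ}

lemma MeasureTheory.IntegrableOn.id_of_sq {S : Set ℝ} {s : ℝ} (hs : 0 < s) (hS : S ⊆ Ici s)
    (hSm : MeasurableSet S) (h : IntegrableOn (fun y => y ^ 2) S ν) :
    IntegrableOn (fun y => y) S ν := by
  refine (h.div_const s).mono' measurable_id.aestronglyMeasurable ?_
  filter_upwards [ae_restrict_mem hSm] with y hy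
  have hsy : s ≤ y := hS hy
  rw [norm_of_nonneg (hs.le.trans hsy), le_div_iff₀ hs]
  nlinarith

lemma setIntegral_id_le_div_of_sq {S : Set ℝ} {s : ℝ} (hs : 0 < s) (hS : S ⊆ Ici s)
    (hSm : MeasurableSet S) (h : IntegrableOn (fun y => y ^ 2) S ν) :
    ∫ y in S, y ∂ν ≤ (∫ y in S, y ^ 2 ∂ν) / s := by
  rw [← integral_div]
  refine setIntegral_mono_on (h.id_of_sq hs hS hSm) (h.div_const s) hSm fun y hy => ?_
  have hsy : s ≤ y := hS hy
  rw [le_div_iff₀ hs]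
  nlinarith

lemma MeasureTheory.IntegrableOn.mul_one_sub_exp_of_sq {S : Set ℝ} {z : ℝ} (hz : 0 ≤ z)
    (hS : S ⊆ Ici 0) (hSm : MeasurableSet S) (h : IntegrableOn (fun y => y ^ 2) S ν) :
    IntegrableOn (fun y => y * (1 - exp (-z * y))) S ν := by
  refine (h.const_mul z).mono' (by fun_prop) ?_
  filter_upwards [ae_restrict_mem hSm] with y hy
  rw [norm_of_nonneg (mul_one_sub_exp_neg_mul_nonneg hz (hS hy))]
  exact mul_one_sub_exp_neg_mul_le_mul_sq (hS hy)

lemma setIntegral_Ioc_half_id_le {ε t : ℝ} (ht : 0 < t)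
    (hint : IntegrableOn (fun y => y ^ 2) (Ioc 0 t) ν)
    (hU : ∫ y in Ioc 0 t, y ^ 2 ∂ν ≤ ε * t) :
    ∫ y in Ioc (t / 2) t, y ∂ν ≤ 2 * ε := by
  have hsub : Ioc (t / 2) t ⊆ Ioc 0 t := Ioc_subset_Ioc_left (half_pos ht).le
  calc ∫ y in Ioc (t / 2) t, y ∂ν
      ≤ (∫ y in Ioc (t / 2) t, y ^ 2 ∂ν) / (t / 2) :=
        setIntegral_id_le_div_of_sq (half_pos ht) (fun y hy => le_of_lt hy.1) measurableSet_Ioc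
          (hint.mono_set hsub)
    _ ≤ (ε * t) / (t / 2) := by
        gcongr
        refine le_trans (setIntegral_mono_set hint (Eventually.of_forall fun y => sq_nonneg y)
          (Eventually.of_forall hsub)) hU
    _ = 2 * ε := by field_simp

lemma setIntegral_Ioc_div_two_pow_id_le {ε x₀ : ℝ} (hx₀ : 0 < x₀)
    (hint : IntegrableOn (fun y => y ^ 2) (Ioc 0 x₀) ν)
    (hU : ∀ x ∈ Ioc 0 x₀, ∫ y in Ioc 0 x, y ^ 2 ∂ν ≤ ε * x) (n : ℕ) :
    ∫ y in Ioc (x₀ / 2 ^ n) x₀, y ∂ν ≤ 2 * ε * n := by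
  induction n with
  | zero => simp
  | succ n ih =>
    set t := x₀ / 2 ^ n
    have ht : 0 < t := by positivity
    have htx₀ : t ≤ x₀ := div_le_self hx₀.le (one_le_pow₀ one_le_two)
    have hsub : Ioc 0 t ⊆ Ioc 0 x₀ := Ioc_subset_Ioc_right htx₀
    have hsplit : Ioc (x₀ / 2 ^ (n + 1)) x₀ = Ioc (t / 2) t ∪ Ioc t x₀ := by
      rw [pow_succ, ← div_div]
      exact (Ioc_union_Ioc_eq_Ioc (half_le_self ht.le) htx₀).symm
    have hint_id : ∀ s, 0 < s → IntegrableOn (fun y => y) (Ioc s x₀) ν := fun s hs =>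
      (hint.mono_set (Ioc_subset_Ioc_left hs.le)).id_of_sq hs (fun y hy => le_of_lt hy.1)
        measurableSet_Ioc
    rw [hsplit, setIntegral_union (Ioc_disjoint_Ioc_of_le le_rfl) measurableSet_Ioc
      ((hint_id _ (half_pos ht)).mono_set (Ioc_subset_Ioc_right htx₀)) (hint_id t ht)]
    have hblock := setIntegral_Ioc_half_id_le ht (hint.mono_set hsub) (hU t ⟨ht, htx₀⟩)
    push_cast
    linarith

lemma setIntegral_Ioc_zero_mul_one_sub_exp_le {ε s z : ℝ} (hε : 0 ≤ ε) (hz : 0 ≤ z)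
    (hzs : z * s ≤ 1) (hint : IntegrableOn (fun y => y ^ 2) (Ioc 0 s) ν)
    (hU : ∫ y in Ioc 0 s, y ^ 2 ∂ν ≤ ε * s) :
    ∫ y in Ioc 0 s, y * (1 - exp (-z * y)) ∂ν ≤ ε :=
  calc ∫ y in Ioc 0 s, y * (1 - exp (-z * y)) ∂ν
      ≤ ∫ y in Ioc 0 s, z * y ^ 2 ∂ν :=
        setIntegral_mono_on (hint.mul_one_sub_exp_of_sq hz (fun y hy => le_of_lt hy.1)
          measurableSet_Ioc) (hint.const_mul z) measurableSet_Ioc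
          fun y hy => mul_one_sub_exp_neg_mul_le_mul_sq hy.1.le
    _ ≤ z * (ε * s) := by
        rw [integral_const_mul]
        exact mul_le_mul_of_nonneg_left hU hz
    _ ≤ ε := by nlinarith

lemma setIntegral_mul_one_sub_exp_le_id {S : Set ℝ} {s z : ℝ} (hs : 0 < s) (hz : 0 ≤ z)
    (hS : S ⊆ Ici s) (hSm : MeasurableSet S) (h : IntegrableOn (fun y => y ^ 2) S ν) :
    ∫ y in S, y * (1 - exp (-z * y)) ∂ν ≤ ∫ y in S, y ∂ν :=
  setIntegral_mono_on (h.mul_one_sub_exp_of_sq hz (hS.trans (Ici_subset_Ici.2 hs.le)) hSm)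
    (h.id_of_sq hs hS hSm) hSm fun _ hy => mul_one_sub_exp_neg_mul_le_self (hs.le.trans (hS hy))

lemma setIntegral_Ioo_eq_add_add {f : ℝ → ℝ} {s x₀ : ℝ} (hs : 0 ≤ s) (hsx₀ : s ≤ x₀)
    (hx₀1 : x₀ < 1) (hf : IntegrableOn f (Ioo 0 1) ν) :
    ∫ y in Ioo 0 1, f y ∂ν
      = (∫ y in Ioc 0 s, f y ∂ν) + (∫ y in Ioc s x₀, f y ∂ν) + ∫ y in Ioo x₀ 1, f y ∂ν := by
  have hsub₀ : Ioc 0 x₀ ⊆ Ioo 0 1 := Ioc_subset_Ioo_right hx₀1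
  rw [← Ioc_union_Ioo_eq_Ioo (hs.trans hsx₀) hx₀1,
    setIntegral_union ((Ioc_disjoint_Ioc_of_le le_rfl).mono_right Ioo_subset_Ioc_self)
      measurableSet_Ioo (hf.mono_set hsub₀) (hf.mono_set (Ioo_subset_Ioo_left (hs.trans hsx₀))),
    ← Ioc_union_Ioc_eq_Ioc hs hsx₀,
    setIntegral_union (Ioc_disjoint_Ioc_of_le le_rfl) measurableSet_Ioc
      (hf.mono_set ((Ioc_subset_Ioc_right hsx₀).trans hsub₀))
      (hf.mono_set ((Ioc_subset_Ioc_left hs).trans hsub₀))]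

lemma setIntegral_Ioo_mul_one_sub_exp_le {ε x₀ z : ℝ} (hε : 0 ≤ ε) (hx₀ : 0 < x₀)
    (hx₀1 : x₀ < 1) (hint : IntegrableOn (fun y => y ^ 2) (Ioo 0 1) ν)
    (hU : ∀ x ∈ Ioc 0 x₀, ∫ y in Ioc 0 x, y ^ 2 ∂ν ≤ ε * x) (hz : 1 ≤ z * x₀) :
    ∫ y in Ioo 0 1, y * (1 - exp (-z * y)) ∂ν
      ≤ 2 * ε / log 2 * log z + 3 * ε + (∫ y in Ioo 0 1, y ^ 2 ∂ν) / x₀ := by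
  obtain ⟨n, hn, hn1⟩ := exists_nat_pow_near hz one_lt_two
  have hzpos : 0 < z := pos_of_mul_pos_left (one_pos.trans_le hz) hx₀.le
  set s := x₀ / 2 ^ (n + 1)
  have hs : 0 < s := by positivity
  have hsx₀ : s ≤ x₀ := div_le_self hx₀.le (one_le_pow₀ one_le_two)
  have hzs : z * s ≤ 1 := by
    rw [← mul_div_assoc, div_le_one (by positivity)]
    exact hn1.le
  have hnlog : n * log 2 ≤ log z := by
    have := log_le_log (by positivity) hn
    rw [log_pow, log_mul hzpos.ne' hx₀.ne'] at this
    linarith [log_nonpos hx₀.le hx₀1.le]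
  have hsub₀ : Ioc 0 x₀ ⊆ Ioo 0 1 := Ioc_subset_Ioo_right hx₀1
  have hsubA : Ioc 0 s ⊆ Ioo 0 1 := (Ioc_subset_Ioc_right hsx₀).trans hsub₀
  have hsubB : Ioc s x₀ ⊆ Ioo 0 1 := (Ioc_subset_Ioc_left hs.le).trans hsub₀
  have hsubC : Ioo x₀ 1 ⊆ Ioo 0 1 := Ioo_subset_Ioo_left hx₀.le
  have hlow := setIntegral_Ioc_zero_mul_one_sub_exp_le hε hzpos.le hzs (hint.mono_set hsubA)
    (hU s ⟨hs, hsx₀⟩)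
  have hmid : ∫ y in Ioc s x₀, y * (1 - exp (-z * y)) ∂ν ≤ 2 * ε * (n + 1) := by
    have hblocks := setIntegral_Ioc_div_two_pow_id_le hx₀ (hint.mono_set hsub₀) hU (n + 1)
    push_cast at hblocks
    exact (setIntegral_mul_one_sub_exp_le_id hs hzpos.le (fun y hy => le_of_lt hy.1)
      measurableSet_Ioc (hint.mono_set hsubB)).trans hblocks
  have htail : ∫ y in Ioo x₀ 1, y * (1 - exp (-z * y)) ∂ν
      ≤ (∫ y in Ioo 0 1, y ^ 2 ∂ν) / x₀ :=
    calc ∫ y in Ioo x₀ 1, y * (1 - exp (-z * y)) ∂ν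
        ≤ ∫ y in Ioo x₀ 1, y ∂ν :=
          setIntegral_mul_one_sub_exp_le_id hx₀ hzpos.le (fun y hy => le_of_lt hy.1)
            measurableSet_Ioo (hint.mono_set hsubC)
      _ ≤ (∫ y in Ioo x₀ 1, y ^ 2 ∂ν) / x₀ :=
          setIntegral_id_le_div_of_sq hx₀ (fun y hy => le_of_lt hy.1) measurableSet_Ioo
            (hint.mono_set hsubC)
      _ ≤ (∫ y in Ioo 0 1, y ^ 2 ∂ν) / x₀ :=
          (div_le_div_iff_of_pos_right hx₀).2 <| setIntegral_mono_set hint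
            (Eventually.of_forall fun y => sq_nonneg y) (Eventually.of_forall hsubC)
  have hsplit := setIntegral_Ioo_eq_add_add hs.le hsx₀ hx₀1
    (hint.mul_one_sub_exp_of_sq hzpos.le (fun y hy => le_of_lt hy.1) measurableSet_Ioo)
  have hnε : 2 * ε * n ≤ 2 * ε / log 2 * log z := by
    rw [div_mul_eq_mul_div, le_div_iff₀ (log_pos one_lt_two)]
    nlinarith
  linarith

end Measure

theorem isLittleO_setIntegral_mul_one_sub_exp_log {ν : Measure ℝ}
    (hint : IntegrableOn (fun y => y ^ 2) (Ioo 0 1) ν)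
    (hU : Tendsto (fun x => (∫ y in Ioc 0 x, y ^ 2 ∂ν) / x) (𝓝[>] 0) (𝓝 0)) :
    (fun z => ∫ y in Ioo 0 1, y * (1 - exp (-z * y)) ∂ν) =o[atTop] log := by
  refine Asymptotics.IsLittleO.of_bound fun c hc => ?_
  set ε := c * log 2 / 4
  have hε : 0 < ε := by have := log_pos one_lt_two; positivity
  obtain ⟨x₀, ⟨hx₀, hx₀1⟩, hUx₀⟩ := exists_forall_Ioc_le_mul_of_tendsto_div hU hε one_pos
  set D := 3 * ε + (∫ y in Ioo 0 1, y ^ 2 ∂ν) / x₀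
  filter_upwards [eventually_ge_atTop (1 / x₀),
    tendsto_log_atTop.eventually_ge_atTop (2 * D / c)] with z hz hlog
  have hzx₀ : 1 ≤ z * x₀ := (div_le_iff₀ hx₀).1 hz
  have hzpos : 0 < z := (one_div_pos.2 hx₀).trans_le hz
  have hD : 0 ≤ D := by
    have : 0 ≤ ∫ y in Ioo 0 1, y ^ 2 ∂ν :=
      setIntegral_nonneg measurableSet_Ioo fun y _ => sq_nonneg y
    positivity
  have hbound := setIntegral_Ioo_mul_one_sub_exp_le hε.le hx₀ hx₀1 hint hUx₀ hzx₀
  have hcoef : 2 * ε / log 2 = c / 2 := by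
    have := (log_pos one_lt_two).ne'
    field_simp
    ring
  rw [hcoef] at hbound
  have hlog' : 2 * D ≤ c * log z := (div_le_iff₀' hc).1 hlog
  rw [norm_of_nonneg (setIntegral_nonneg measurableSet_Ioo fun y hy =>
      mul_one_sub_exp_neg_mul_nonneg hzpos.le hy.1.le),
    norm_of_nonneg (by nlinarith)]
  linarith

theorem log_growth_of_tauberian_rho_eq_one_general
    (a : ℝ) (ν : MeasureTheory.Measure ℝ)
    (hint1 : MeasureTheory.IntegrableOn (fun y => y ^ 2) (Set.Ioo 0 1) ν)
    (U : ℝ → ℝ) (hU : ∀ x > (0:ℝ), U x = ∫ y in Set.Ioc 0 x, y ^ 2 ∂ν)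
    (J' : ℝ → ℝ)
    (hJ : ∀ z > (0:ℝ), J' z = -a
      + (∫ y in Set.Ioo 0 1, y * (1 - Real.exp (-z * y)) ∂ν)
      - ∫ y in Set.Ici 1, y * Real.exp (-z * y) ∂ν)
    (M : ℝ → ℝ)
    (hUasymp : Filter.Tendsto (fun x => U x / (x * M x))
      (nhdsWithin 0 (Set.Ioi 0)) (nhds 1))
    (hM0 : Filter.Tendsto M (nhdsWithin 0 (Set.Ioi 0)) (nhds 0)) :
    ∀ C > (0:ℝ), ∀ R : ℝ, ∃ᶠ z in Filter.atTop,
      R ≤ Real.log z - C * J' z := by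
  intro C hC R
  have hUx : Tendsto (fun x => (∫ y in Ioc 0 x, y ^ 2 ∂ν) / x) (𝓝[>] 0) (𝓝 0) :=
    (tendsto_div_of_tendsto_div_mul hUasymp one_ne_zero hM0).congr'
      (eventually_mem_nhdsWithin.mono fun x hx => by rw [hU x hx])
  have hsmall := (isLittleO_setIntegral_mul_one_sub_exp_log hint1 hUx).bound
    (c := 1 / (2 * C)) (by positivity)
  refine Eventually.frequently ?_
  filter_upwards [hsmall, eventually_ge_atTop 1,
    tendsto_log_atTop.eventually_ge_atTop (2 * (R - C * a))] with z hFz hz hlog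
  have hzpos : 0 < z := one_pos.trans_le hz
  have hJz : J' z ≤ -a + ∫ y in Ioo 0 1, y * (1 - exp (-z * y)) ∂ν := by
    have : 0 ≤ ∫ y in Ici 1, y * exp (-z * y) ∂ν := setIntegral_nonneg measurableSet_Ici
      fun y hy => mul_nonneg (zero_le_one.trans hy) (exp_pos _).le
    rw [hJ z hzpos]
    linarith
  rw [norm_of_nonneg (log_nonneg hz)] at hFz
  have hCF : C * ∫ y in Ioo 0 1, y * (1 - exp (-z * y)) ∂ν ≤ log z / 2 := by
    calc _ ≤ C * (1 / (2 * C) * log z) :=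
          mul_le_mul_of_nonneg_left ((le_norm_self _).trans hFz) hC.le
      _ = log z / 2 := by field_simp
  have hCJ := mul_le_mul_of_nonneg_left hJz hC.le
  linarith

/-- (Tauberian existence criterion, boundary case `ρ = 1`.) If `ν` has
a density, `U(x) = ∫_{(0,x]} y² ν(dy)` behaves like `x M(x)` as `x → 0⁺` with `M`
slowly varying at `0`, `M(x) → 0` as `x → 0⁺` and `∫₀¹ M(x)/x dx = +∞`, then the
logarithmic growth condition `limsup_{z→∞}(ln z − C J′(z)) = +∞` holds for every
`C > 0`. -/
theorem log_growth_of_tauberian_rho_eq_one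
    (a : ℝ) (ν : MeasureTheory.Measure ℝ) (hν : ν (Set.Iic 0) = 0)
    (hac : ν ≪ MeasureTheory.volume)
    (hint1 : MeasureTheory.IntegrableOn (fun y => y ^ 2) (Set.Ioo 0 1) ν)
    (hint2 : MeasureTheory.IntegrableOn (fun y => y) (Set.Ici 1) ν)
    (U : ℝ → ℝ) (hU : ∀ x > (0:ℝ), U x = ∫ y in Set.Ioc 0 x, y ^ 2 ∂ν)
    (J' : ℝ → ℝ)
    (hJ : ∀ z > (0:ℝ), J' z = -a
      + (∫ y in Set.Ioo 0 1, y * (1 - Real.exp (-z * y)) ∂ν)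
      - ∫ y in Set.Ici 1, y * Real.exp (-z * y) ∂ν)
    (M : ℝ → ℝ) (δ : ℝ) (hδ : 0 < δ)
    (hMpos : ∀ x ∈ Set.Ioo (0:ℝ) δ, 0 < M x)
    (hslow : ∀ x > (0:ℝ), Filter.Tendsto (fun t => M (t * x) / M t)
      (nhdsWithin 0 (Set.Ioi 0)) (nhds 1))
    (hUasymp : Filter.Tendsto (fun x => U x / (x * M x))
      (nhdsWithin 0 (Set.Ioi 0)) (nhds 1))
    (hM0 : Filter.Tendsto M (nhdsWithin 0 (Set.Ioi 0)) (nhds 0))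
    (hMdiv : ∫⁻ x in Set.Ioc (0:ℝ) 1, ENNReal.ofReal (M x / x) = ⊤) :
    ∀ C > (0:ℝ), ∀ R : ℝ, ∃ᶠ z in Filter.atTop,
      R ≤ Real.log z - C * J' z :=
  log_growth_of_tauberian_rho_eq_one_general a ν hint1 U hU J' hJ M hUasymp hM0
end
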